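/- arXiv:2106.02747 — 6 statements merged into one kernel-verified Lean document; each statement's English description precedes it below -/
import Mathlib

section
/- Let q be a prime power, let n, k, ℓ, t be natural numbers with t ≤ n, and let C ⊆ F_q^n be a linear code with exactly q^k elements. Let f : {0,…,n} → ℝ_{≥0}, set π(e) := f(wt(e)) for e ∈ F_q^n, assume Σ_{e ∈ F_q^n} π(e)² = 1, and set p_t := S_t·f(t)². Let A : F_q^n × {0,1}^ℓ → F_q^n be any function, and let ε be the fraction of triples (c, e, w) ∈ C × {e : wt(e) = t} × {0,1}^ℓ satisfying A(c + e, w) = e. Define real vectors indexed by F_q^n × F_q^n × {0,1}^ℓ: ψ_A(a, b, w) := (2^ℓ q^k)^{−1/2}·π(a + A(b, w))·1[b − a − A(b, w) ∈ C], and φ(a, b, w) := 1[a = 0]·Σ_{c ∈ C} π(b − c); assume Z := Σ_{a,b,w} φ(a,b,w)² > 0 and set ψ_ideal := Z^{−1/2}·φ. Then ⟨ψ_A, ψ_ideal⟩ ≥ (2^ℓ q^k / Z)^{1/2}·p_t·ε, and consequently (1 − ⟨ψ_A, ψ_ideal⟩²)^{1/2} ≤ (1 − (2^ℓ q^k / Z)·p_t²·ε²)^{1/2}.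 -/
open scoped BigOperators Classical

/-!
Every decoding success `(c, e, w)` contributes the point `(0, c + e, w)`, on which the decoder's
amplitude is `f(wt e) = f(t)` and the ideal amplitude, a sum over codewords containing the term
`f(wt(c + e - c))`, is at least `f(t)`. Distinct successes give distinct points and all
amplitudes are nonnegative, so the unnormalised inner product is at least `N · f(t)²`, where
`N = ε · q^k · S_t · 2^ℓ` is the number of successes. After normalisation this is
`√(2^ℓ q^k / Z) · p_t · ε`, and the trace-distance bound follows because `√(1 - x²)` decreases
for `x ≥ 0`.
-/

open Finset

section HammingSphere

variable {ι G : Type*} [Fintype ι] [Fintype G] [Zero G] [DecidableEq G]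

theorem card_fun_support_eq (s : Finset ι) :
    Fintype.card {e : ι → G // ∀ i, e i ≠ 0 ↔ i ∈ s} = (Fintype.card G - 1) ^ #s := by
  classical
  rw [Fintype.card_congr (Equiv.subtypePiEquivPi (p := fun i (x : G) => x ≠ 0 ↔ i ∈ s)),
    Fintype.card_pi]
  calc ∏ i, Fintype.card {x : G // x ≠ 0 ↔ i ∈ s}
      = ∏ i, if i ∈ s then Fintype.card G - 1 else 1 := by
        refine prod_congr rfl fun i _ => ?_
        split_ifs with hi <;> simp [hi, Fintype.card_subtype_compl]
    _ = (Fintype.card G - 1) ^ #s := by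
        rw [prod_ite_mem, univ_inter, prod_const]

theorem card_hammingNorm_eq (t : ℕ) :
    Nat.card {e : ι → G // hammingNorm e = t}
      = (Fintype.card ι).choose t * (Fintype.card G - 1) ^ t := by
  classical
  rw [Nat.card_eq_fintype_card, Fintype.card_subtype, card_eq_sum_card_fiberwise
    (f := fun e : ι → G => ({i | e i ≠ 0} : Finset ι)) (t := powersetCard t univ)
    (fun e he => by simpa [mem_powersetCard, hammingNorm] using he),
    sum_congr rfl (g := fun _ => (Fintype.card G - 1) ^ t), sum_const, card_powersetCard,
    card_univ, smul_eq_mul]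
  intro s hs
  rw [mem_powersetCard] at hs
  rw [filter_filter, ← hs.2, ← card_fun_support_eq, Fintype.card_subtype]
  congr 1
  refine filter_congr fun e _ => ?_
  rw [and_iff_right_of_imp fun h => by rw [hammingNorm, h]]
  simp [Finset.ext_iff]

end HammingSphere

theorem Fintype.sum_comp_le_sum_of_injective {α β M : Type*} [Fintype α] [Fintype β]
    [AddCommMonoid M] [PartialOrder M] [IsOrderedAddMonoid M] {g : α → β}
    (hg : Function.Injective g) {h : β → M} (hh : ∀ b, 0 ≤ h b) :
    ∑ a, h (g a) ≤ ∑ b, h b := by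
  classical
  rw [← sum_image hg.injOn]
  exact sum_le_sum_of_subset_of_nonneg (subset_univ _) fun b _ _ => hh b

theorem Nat.card_subtype_div_mul_card {α : Type*} [Finite α] (p : α → Prop) :
    (Nat.card {a // p a} : ℝ) / Nat.card α * Nat.card α = Nat.card {a // p a} :=
  div_mul_cancel_of_imp fun h => by
    have := Finite.card_subtype_le p
    rw [Nat.cast_eq_zero.mp h] at this
    simp [Nat.le_zero.mp this]

theorem Real.sqrt_one_sub_sq_le_of_le {a b : ℝ} (ha : 0 ≤ a) (hab : a ≤ b) :
    √(1 - b ^ 2) ≤ √(1 - a ^ 2) :=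
  Real.sqrt_le_sqrt (by nlinarith)

section Decoder

variable {ι G W : Type*} [Fintype ι] [AddCommGroup G] [DecidableEq G]
  (C : AddSubgroup (ι → G)) (f : ℕ → ℝ) (A : (ι → G) → W → ι → G)

/-- `ψ_A` without its normalising factor `(2^ℓ q^k)^{-1/2}`. -/
noncomputable def decoderAmplitude (x : (ι → G) × (ι → G) × W) : ℝ :=
  f (hammingNorm (x.1 + A x.2.1 x.2.2)) * if x.2.1 - x.1 - A x.2.1 x.2.2 ∈ C then 1 else 0

/-- The vector `φ`, i.e. `ψ_ideal` without its normalising factor `Z^{-1/2}`. -/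
noncomputable def idealAmplitude [DecidableEq ι] [Fintype G] (x : (ι → G) × (ι → G) × W) : ℝ :=
  (if x.1 = 0 then 1 else 0) * ∑ c : C, f (hammingNorm (x.2.1 - (c : ι → G)))

abbrev DecodingSuccess (t : ℕ) : Type _ :=
  {x : C × {e : ι → G // hammingNorm e = t} × W //
    A ((x.1 : ι → G) + (x.2.1 : ι → G)) x.2.2 = (x.2.1 : ι → G)}

variable {C f A}

theorem decoderAmplitude_nonneg (hf : ∀ i, 0 ≤ f i) (x : (ι → G) × (ι → G) × W) :
    0 ≤ decoderAmplitude C f A x :=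
  mul_nonneg (hf _) (by split_ifs <;> norm_num)

theorem idealAmplitude_nonneg [DecidableEq ι] [Fintype G] (hf : ∀ i, 0 ≤ f i)
    (x : (ι → G) × (ι → G) × W) : 0 ≤ idealAmplitude C f x :=
  mul_nonneg (by split_ifs <;> norm_num) (sum_nonneg fun _ _ => hf _)

theorem decoderAmplitude_zero_add {c e : ι → G} (hc : c ∈ C) {w : W} (hA : A (c + e) w = e) :
    decoderAmplitude C f A (0, c + e, w) = f (hammingNorm e) := by
  simp [decoderAmplitude, hA, hc]

theorem le_idealAmplitude_zero_add [DecidableEq ι] [Fintype G] (hf : ∀ i, 0 ≤ f i) {c : ι → G}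
    (hc : c ∈ C) (e : ι → G) (w : W) : f (hammingNorm e) ≤ idealAmplitude C f (0, c + e, w) := by
  simpa [idealAmplitude] using
    single_le_sum (f := fun c' : C => f (hammingNorm (c + e - (c' : ι → G)))) (fun _ _ => hf _)
      (mem_univ ⟨c, hc⟩)

theorem card_decodingSuccess_mul_le_sum [DecidableEq ι] [Fintype G] [Fintype W]
    (hf : ∀ i, 0 ≤ f i) (t : ℕ) :
    Nat.card (DecodingSuccess C A t) * f t ^ 2
      ≤ ∑ x, decoderAmplitude C f A x * idealAmplitude C f x := by
  let g : DecodingSuccess C A t → (ι → G) × (ι → G) × W :=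
    fun y => (0, (y.1.1 : ι → G) + y.1.2.1, y.1.2.2)
  have hg : Function.Injective g := by
    rintro ⟨⟨c, e, w⟩, hA⟩ ⟨⟨c', e', w'⟩, hA'⟩ h
    simp only [g, Prod.mk.injEq] at h
    obtain ⟨-, hce, rfl⟩ := h
    have he : (e : ι → G) = e' := by rw [← hA, ← hA', hce]
    have hc : (c : ι → G) = c' := by rw [he] at hce; exact add_right_cancel hce
    simp only [Subtype.coe_inj] at he hc
    subst he hc
    rfl
  calc Nat.card (DecodingSuccess C A t) * f t ^ 2
      = ∑ y : DecodingSuccess C A t, f t * f t := by simp [sq, Nat.card_eq_fintype_card]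
    _ ≤ ∑ y, decoderAmplitude C f A (g y) * idealAmplitude C f (g y) := by
        refine sum_le_sum fun ⟨⟨c, e, w⟩, hA⟩ _ => ?_
        have hφ := le_idealAmplitude_zero_add hf c.2 e w
        rw [e.2] at hφ
        rw [show g _ = (0, (c : ι → G) + e, w) from rfl, decoderAmplitude_zero_add c.2 hA, e.2]
        exact mul_le_mul_of_nonneg_left hφ (hf t)
    _ ≤ ∑ x, decoderAmplitude C f A x * idealAmplitude C f x :=
        Fintype.sum_comp_le_sum_of_injective hg fun x =>
          mul_nonneg (decoderAmplitude_nonneg hf x) (idealAmplitude_nonneg hf x)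

theorem sqrt_div_mul_card_decodingSuccess_le_inner [DecidableEq ι] [Fintype G] [Fintype W]
    (hf : ∀ i, 0 ≤ f i) (t : ℕ) {M : ℝ} (hM : 0 < M) (Z : ℝ) :
    √(M / Z) * (Nat.card (DecodingSuccess C A t) * f t ^ 2 / M)
      ≤ ∑ x, (√M)⁻¹ * decoderAmplitude C f A x * ((√Z)⁻¹ * idealAmplitude C f x) := by
  calc √(M / Z) * (Nat.card (DecodingSuccess C A t) * f t ^ 2 / M)
      = (√M)⁻¹ * (√Z)⁻¹ * (Nat.card (DecodingSuccess C A t) * f t ^ 2) := by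
        rw [Real.sqrt_div hM.le]
        field_simp
        rw [Real.sq_sqrt hM.le]
        ring
    _ ≤ (√M)⁻¹ * (√Z)⁻¹ * ∑ x, decoderAmplitude C f A x * idealAmplitude C f x := by
        have := card_decodingSuccess_mul_le_sum (C := C) (A := A) hf t
        gcongr
    _ = ∑ x, (√M)⁻¹ * decoderAmplitude C f A x * ((√Z)⁻¹ * idealAmplitude C f x) := by
        rw [mul_sum]
        exact sum_congr rfl fun x _ => by ring

end Decoder

theorem decoder_state_close_to_ideal_general
    (q n k ℓ t : ℕ)
    (F : Type) [Field F] [Fintype F] [DecidableEq F]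
    (hF : Fintype.card F = q)
    (C : Submodule F (Fin n → F))
    (hC : Nat.card C = q ^ k)
    (f : ℕ → ℝ) (hf : ∀ i, 0 ≤ f i)
    (pt : ℝ)
    (hpt : pt = ((q - 1 : ℝ) ^ t * (n.choose t : ℝ)) * f t ^ 2)
    (A : (Fin n → F) → (Fin ℓ → Bool) → (Fin n → F))
    (ε : ℝ)
    (hε : ε = (Nat.card {x : C × {e : Fin n → F // hammingNorm e = t} × (Fin ℓ → Bool) //
        A ((x.1 : Fin n → F) + (x.2.1 : Fin n → F)) x.2.2 = (x.2.1 : Fin n → F)} : ℝ) /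
      (Nat.card (C × {e : Fin n → F // hammingNorm e = t} × (Fin ℓ → Bool)) : ℝ))
    (ψA φ : (Fin n → F) × (Fin n → F) × (Fin ℓ → Bool) → ℝ)
    (hψA : ∀ x : (Fin n → F) × (Fin n → F) × (Fin ℓ → Bool),
      ψA x = (Real.sqrt (2 ^ ℓ * q ^ k))⁻¹ * f (hammingNorm (x.1 + A x.2.1 x.2.2)) *
        (if x.2.1 - x.1 - A x.2.1 x.2.2 ∈ C then 1 else 0))
    (hφ : ∀ x : (Fin n → F) × (Fin n → F) × (Fin ℓ → Bool),
      φ x = (if x.1 = 0 then 1 else 0) * ∑ c : C, f (hammingNorm (x.2.1 - (c : Fin n → F))))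
    (Z : ℝ)
    (hZpos : 0 < Z)
    (ψideal : (Fin n → F) × (Fin n → F) × (Fin ℓ → Bool) → ℝ)
    (hψideal : ∀ x, ψideal x = (Real.sqrt Z)⁻¹ * φ x) :
    (Real.sqrt (2 ^ ℓ * q ^ k / Z) * pt * ε ≤
        ∑ x : (Fin n → F) × (Fin n → F) × (Fin ℓ → Bool), ψA x * ψideal x)
    ∧ Real.sqrt (1 - (∑ x : (Fin n → F) × (Fin n → F) × (Fin ℓ → Bool), ψA x * ψideal x) ^ 2)
        ≤ Real.sqrt (1 - (2 ^ ℓ * q ^ k / Z) * pt ^ 2 * ε ^ 2) := by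
  set M : ℝ := 2 ^ ℓ * q ^ k with hMdef
  have hq_one : (1 : ℝ) ≤ q := by exact_mod_cast hF ▸ Fintype.card_pos
  have hM : 0 < M := by positivity
  have hsuccess : pt * ε = Nat.card (DecodingSuccess C.toAddSubgroup A t) * f t ^ 2 / M := by
    -- `DecodingSuccess C.toAddSubgroup A t` is, up to unfolding, the subtype counted in `hε`.
    have hN : (Nat.card (DecodingSuccess C.toAddSubgroup A t) : ℝ)
        = ε * Nat.card (C × {e : Fin n → F // hammingNorm e = t} × (Fin ℓ → Bool)) := by
      rw [hε]
      exact (Nat.card_subtype_div_mul_card _).symm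
    rw [hN, Nat.card_prod, Nat.card_prod, hC, card_hammingNorm_eq, Nat.card_eq_fintype_card,
      Fintype.card_fun, Fintype.card_bool, Fintype.card_fin, Fintype.card_fin, hF, hpt]
    push_cast [Nat.cast_sub (by exact_mod_cast hq_one : 1 ≤ q)]
    field_simp
    rw [hMdef]
    ring
  have hinner : √(M / Z) * pt * ε ≤ ∑ x, ψA x * ψideal x := by
    rw [mul_assoc, hsuccess]
    convert sqrt_div_mul_card_decodingSuccess_le_inner hf t hM Z using 3 with x
    · rw [hψA, mul_assoc]
      rfl
    · rw [hψideal, hφ]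
      rfl
  have hpt0 : 0 ≤ pt := hpt ▸ by have := sub_nonneg.mpr hq_one; positivity
  have hε0 : 0 ≤ ε := hε ▸ by positivity
  refine ⟨hinner, ?_⟩
  have := Real.sqrt_one_sub_sq_le_of_le
    (mul_nonneg (mul_nonneg (Real.sqrt_nonneg _) hpt0) hε0) hinner
  rwa [mul_pow, mul_pow, Real.sq_sqrt (div_nonneg hM.le hZpos.le)] at this

/-- Lemma 2 (lem:dist_algo_ideal): the state produced by the quantized decoder has
inner product at least `√(2^ℓ q^k / Z)·p_t·ε` with the ideal disentangled state, hence
trace distance at most `√(1 − (2^ℓ q^k / Z)·p_t²·ε²)`. -/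
theorem decoder_state_close_to_ideal
    (q n k ℓ t : ℕ) (hq : IsPrimePow q) (ht : t ≤ n)
    (F : Type) [Field F] [Fintype F] [DecidableEq F]
    (hF : Fintype.card F = q)
    (C : Submodule F (Fin n → F))
    (hC : Nat.card C = q ^ k)
    (f : ℕ → ℝ) (hf : ∀ i, 0 ≤ f i)
    (hnorm : ∑ e : Fin n → F, f (hammingNorm e) ^ 2 = 1)
    (pt : ℝ)
    (hpt : pt = ((q - 1 : ℝ) ^ t * (n.choose t : ℝ)) * f t ^ 2)
    (A : (Fin n → F) → (Fin ℓ → Bool) → (Fin n → F))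
    (ε : ℝ)
    (hε : ε = (Nat.card {x : C × {e : Fin n → F // hammingNorm e = t} × (Fin ℓ → Bool) //
        A ((x.1 : Fin n → F) + (x.2.1 : Fin n → F)) x.2.2 = (x.2.1 : Fin n → F)} : ℝ) /
      (Nat.card (C × {e : Fin n → F // hammingNorm e = t} × (Fin ℓ → Bool)) : ℝ))
    (ψA φ : (Fin n → F) × (Fin n → F) × (Fin ℓ → Bool) → ℝ)
    (hψA : ∀ x : (Fin n → F) × (Fin n → F) × (Fin ℓ → Bool),
      ψA x = (Real.sqrt (2 ^ ℓ * q ^ k))⁻¹ * f (hammingNorm (x.1 + A x.2.1 x.2.2)) *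
        (if x.2.1 - x.1 - A x.2.1 x.2.2 ∈ C then 1 else 0))
    (hφ : ∀ x : (Fin n → F) × (Fin n → F) × (Fin ℓ → Bool),
      φ x = (if x.1 = 0 then 1 else 0) * ∑ c : C, f (hammingNorm (x.2.1 - (c : Fin n → F))))
    (Z : ℝ)
    (hZ : Z = ∑ x : (Fin n → F) × (Fin n → F) × (Fin ℓ → Bool), φ x ^ 2)
    (hZpos : 0 < Z)
    (ψideal : (Fin n → F) × (Fin n → F) × (Fin ℓ → Bool) → ℝ)
    (hψideal : ∀ x, ψideal x = (Real.sqrt Z)⁻¹ * φ x) :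
    (Real.sqrt (2 ^ ℓ * q ^ k / Z) * pt * ε ≤
        ∑ x : (Fin n → F) × (Fin n → F) × (Fin ℓ → Bool), ψA x * ψideal x)
    ∧ Real.sqrt (1 - (∑ x : (Fin n → F) × (Fin n → F) × (Fin ℓ → Bool), ψA x * ψideal x) ^ 2)
        ≤ Real.sqrt (1 - (2 ^ ℓ * q ^ k / Z) * pt ^ 2 * ε ^ 2) :=
  decoder_state_close_to_ideal_general q n k ℓ t F hF C hC f hf pt hpt A ε hε ψA φ hψA hφ Z hZpos
    ψideal hψideal
end

section
/- There exists a universal constant C > 0 such that for every prime power q, every n ≥ 1, every 0 ≤ k ≤ n, and every set E of F_q-linear subspaces of F_q^n, the following holds: the probability, over a uniformly random matrix G ∈ F_q^{k×n}, that the row space of G belongs to E is at most the probability, over a uniformly random matrix H ∈ F_q^{(n−k)×n}, that the kernel {x ∈ F_q^n : H·xᵀ = 0} belongs to E, plus C·q^{−min(k, n−k)}. -/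
/-!
Among full-rank matrices, both models are uniform over the `k`-dimensional subspaces: a
`k`-dimensional `V` is the row space of exactly `|GL_k(𝔽_q)|` full-rank `k × n` matrices (the
ordered bases of `V`), and the kernel of exactly `|GL_{n-k}(𝔽_q)|` full-rank `(n - k) × n` matrices
(the isomorphisms `𝔽_q^n / V ≃ 𝔽_q^{n-k}`). So if `μ` is the fraction of `k`-dimensional subspaces
lying in `E`, then `P_G(E) ≤ P(G rank deficient) + μ` and `P_H(E) ≥ μ · P(H full rank)`.
A uniform `a × d` matrix with `a ≤ d` is rank deficient with probability
`1 - ∏_{i<a} (1 - q^{i-d}) ≤ q^{a-d}`, which gives the constant `2`.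
-/

open Module Submodule Finset

theorem Nat.card_eq_card_mul_of_card_fiber {α β : Type*} [Finite α] [Finite β] {f : α → β}
    {c : ℕ} (hf : ∀ b, Nat.card {a // f a = b} = c) : Nat.card α = Nat.card β * c := by
  have := Fintype.ofFinite β
  rw [← Nat.card_congr (Equiv.sigmaFiberEquiv f), Nat.card_sigma, Nat.card_eq_fintype_card]
  simp [hf, mul_comm]

theorem card_preimage_eq_of_card_fiber {α β : Type*} [Finite α] [Finite β] {f : α → β}
    {c : ℕ} (hf : ∀ b, Nat.card {a // f a = b} = c) (E : Set β) :
    (Nat.card {a // f a ∈ E} : ℝ) = Nat.card E / Nat.card β * Nat.card α := by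
  have hfib (b : E) : Nat.card {a : {a // f a ∈ E} // (⟨f a.1, a.2⟩ : E) = b} = c := by
    rw [← hf b]
    exact Nat.card_congr ((Equiv.subtypeEquivRight fun _ => Subtype.ext_iff).trans
      (Equiv.subtypeSubtypeEquivSubtype (q := (f · = b.1)) fun h => h.symm ▸ b.2))
  have hE : Nat.card {a // f a ∈ E} = Nat.card E * c := Nat.card_eq_card_mul_of_card_fiber hfib
  rw [hE, Nat.card_eq_card_mul_of_card_fiber hf]
  rcases Nat.eq_zero_or_pos (Nat.card β) with h | h
  · have : Nat.card E = 0 := Nat.eq_zero_of_le_zero (h ▸ Finite.card_subtype_le _)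
    rw [this, h]; simp
  · push_cast
    field_simp

theorem Nat.card_add_card_le_card_add_card_subtype {α : Type*} [Finite α] (p r : α → Prop) :
    Nat.card {a // r a} + Nat.card {a // p a} ≤ Nat.card α + Nat.card {a : {a // p a} // r a} := by
  rw [Nat.card_congr (Equiv.subtypeSubtypeEquivSubtypeInter p r)]
  have h := Set.ncard_union_add_ncard_inter {a | p a} {a | r a}
  have h2 := Set.ncard_le_card ({a | p a} ∪ {a | r a})
  change Nat.card {a | r a} + Nat.card {a | p a} ≤ _ + Nat.card ({a | p a} ∩ {a | r a} : Set α)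
  simp only [Nat.card_coe_set_eq]
  omega

theorem one_sub_pow_le_prod_one_sub_pow {x : ℝ} (h0 : 0 ≤ x) (h1 : 2 * x ≤ 1) {k d : ℕ}
    (hkd : k ≤ d) : 1 - x ^ (d - k) ≤ ∏ i ∈ range k, (1 - x ^ (d - i)) := by
  induction k with
  | zero => simpa using pow_nonneg h0 d
  | succ k ih =>
    have hy : 0 ≤ 1 - x ^ (d - k) := sub_nonneg.2 (pow_le_one₀ h0 (by linarith))
    have hxy : 2 * x ^ (d - k) ≤ x ^ (d - (k + 1)) := by
      rw [show d - k = d - (k + 1) + 1 by omega, pow_succ]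
      nlinarith [pow_nonneg h0 (d - (k + 1))]
    rw [prod_range_succ]
    nlinarith [ih (by omega), pow_nonneg h0 (d - k)]

section Fibers

variable {K W U : Type*} [Field K] [AddCommGroup W] [Module K W] [AddCommGroup U] [Module K U]

def linearIndependentSpan {k : ℕ} (s : {s : Fin k → W // LinearIndependent K s}) :
    {V : Submodule K W // finrank K V = k} :=
  ⟨span K (Set.range s.1), by rw [finrank_span_eq_card s.2, Fintype.card_fin]⟩

noncomputable def linearIndependentSpanFiberEquiv [FiniteDimensional K W] {k : ℕ}
    (V : {V : Submodule K W // finrank K V = k}) :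
    {s // linearIndependentSpan s = V} ≃ {t : Fin k → V.1 // LinearIndependent K t} where
  toFun s := ⟨fun i => ⟨s.1.1 i, congrArg Subtype.val s.2 ▸ subset_span (Set.mem_range_self i)⟩,
    s.1.2.of_comp V.1.subtype⟩
  invFun t := ⟨⟨V.1.subtype ∘ t.1, t.2.map' _ (ker_subtype _)⟩, Subtype.ext <| by
    change span K (Set.range (V.1.subtype ∘ t.1)) = V.1
    rw [Set.range_comp, span_image,
      t.2.span_eq_top_of_card_eq_finrank' (by rw [Fintype.card_fin, V.2]), map_subtype_top]⟩
  left_inv _ := rfl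
  right_inv _ := rfl

theorem card_linearIndependentSpan_fiber [Fintype K] [Finite W] {k : ℕ}
    (V : {V : Submodule K W // finrank K V = k}) :
    Nat.card {s // linearIndependentSpan s = V} =
      ∏ i : Fin k, (Fintype.card K ^ k - Fintype.card K ^ (i : ℕ)) := by
  rw [Nat.card_congr (linearIndependentSpanFiberEquiv V), card_linearIndependent V.2.ge, V.2]

theorem finrank_ker_mulVecLin_add_finrank_span {m n : ℕ} (H : Fin m → Fin n → K) :
    finrank K (LinearMap.ker (Matrix.of H).mulVecLin) + finrank K (span K (Set.range H)) = n := by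
  have h := (Matrix.of H).mulVecLin.finrank_range_add_finrank_ker
  rw [← Matrix.rank, Matrix.rank_eq_finrank_span_row, Module.finrank_fin_fun] at h
  exact (add_comm _ _).trans h

def linearIndependentKer {k m n : ℕ} (hkmn : k + m = n)
    (H : {H : Fin m → Fin n → K // LinearIndependent K H}) :
    {V : Submodule K (Fin n → K) // finrank K V = k} :=
  ⟨LinearMap.ker (Matrix.of H.1).mulVecLin, by
    have := finrank_ker_mulVecLin_add_finrank_span H.1
    rw [finrank_span_eq_card H.2, Fintype.card_fin] at this
    omega⟩

def kerEqEquivInjective (V : Submodule K W) :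
    {φ : W →ₗ[K] U // LinearMap.ker φ = V} ≃ {ψ : (W ⧸ V) →ₗ[K] U // LinearMap.ker ψ = ⊥} where
  toFun φ := ⟨V.liftQ φ.1 φ.2.ge, ker_liftQ_eq_bot' _ _ φ.2.symm⟩
  invFun ψ := ⟨ψ.1 ∘ₗ V.mkQ, by rw [LinearMap.ker_comp, ψ.2, comap_bot, ker_mkQ]⟩
  left_inv φ := Subtype.ext (V.liftQ_mkQ φ.1 _)
  right_inv ψ := Subtype.ext (linearMap_qext V rfl)

noncomputable def injectiveEquivLinearIndependent {ι : Type*} (b : Basis ι K W) :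
    {ψ : W →ₗ[K] U // LinearMap.ker ψ = ⊥} ≃ {s : ι → U // LinearIndependent K s} :=
  (b.constr K).toEquiv.symm.subtypeEquiv fun ψ => by
    refine ⟨fun h => b.linearIndependent.map' ψ h, fun h => ?_⟩
    rw [LinearMap.ker_eq_bot, ← b.constr_self K ψ]
    exact b.injective_constr_of_linearIndependent h

theorem card_ker_eq [FiniteDimensional K W] (V : Submodule K W) {d : ℕ}
    (hd : finrank K (W ⧸ V) = d) :
    Nat.card {φ : W →ₗ[K] U // LinearMap.ker φ = V} =
      Nat.card {s : Fin d → U // LinearIndependent K s} :=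
  Nat.card_congr <| (kerEqEquivInjective V).trans
    (injectiveEquivLinearIndependent (Module.finBasisOfFinrankEq K _ hd))

theorem linearIndependent_of_ker_mulVecLin {k m n : ℕ} (hkmn : k + m = n) {H : Fin m → Fin n → K}
    (hH : finrank K (LinearMap.ker (Matrix.of H).mulVecLin) = k) : LinearIndependent K H := by
  have := finrank_ker_mulVecLin_add_finrank_span H
  rw [linearIndependent_iff_card_eq_finrank_span, Fintype.card_fin, Set.finrank]
  omega

theorem card_linearIndependentKer_fiber [Fintype K] {k m n : ℕ} (hkmn : k + m = n)
    (V : {V : Submodule K (Fin n → K) // finrank K V = k}) :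
    Nat.card {H // linearIndependentKer hkmn H = V} =
      Nat.card {s : Fin m → Fin m → K // LinearIndependent K s} := by
  have hV : finrank K ((Fin n → K) ⧸ V.1) = m := by
    have := V.1.finrank_quotient_add_finrank
    rw [V.2, Module.finrank_fin_fun] at this
    omega
  rw [← card_ker_eq V.1 hV]
  refine Nat.card_congr <| (Equiv.subtypeEquivRight fun _ => Subtype.ext_iff).trans <|
    (Equiv.subtypeSubtypeEquivSubtype (q := fun H => LinearMap.ker (Matrix.of H).mulVecLin = V.1)
      fun h => linearIndependent_of_ker_mulVecLin hkmn (h ▸ V.2)).trans <|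
    (Matrix.of.trans Matrix.toLin'.toEquiv).subtypeEquiv fun _ => Iff.rfl

end Fibers

section Fraction

variable (K : Type*) {W : Type*} [Field K] [AddCommGroup W] [Module K W]

noncomputable def grassmannianFraction (k : ℕ) (E : Set (Submodule K W)) : ℝ :=
  Nat.card {V : {V : Submodule K W // finrank K V = k} // V.1 ∈ E} /
    Nat.card {V : Submodule K W // finrank K V = k}

variable {K}

theorem grassmannianFraction_nonneg (k : ℕ) (E : Set (Submodule K W)) :
    0 ≤ grassmannianFraction K k E := by
  unfold grassmannianFraction; positivity

variable [Finite W]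

theorem grassmannianFraction_le_one (k : ℕ) (E : Set (Submodule K W)) :
    grassmannianFraction K k E ≤ 1 :=
  div_le_one_of_le₀ (by exact_mod_cast Finite.card_subtype_le _) (Nat.cast_nonneg _)

variable [Fintype K]

theorem card_linearIndependent_span_mem (k : ℕ) (E : Set (Submodule K W)) :
    (Nat.card {s : {s : Fin k → W // LinearIndependent K s} // span K (Set.range s.1) ∈ E} : ℝ) =
      grassmannianFraction K k E * Nat.card {s : Fin k → W // LinearIndependent K s} :=
  card_preimage_eq_of_card_fiber card_linearIndependentSpan_fiber (Subtype.val ⁻¹' E)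

theorem card_linearIndependent_ker_mem {k m n : ℕ} (hkmn : k + m = n)
    (E : Set (Submodule K (Fin n → K))) :
    (Nat.card {H : {H : Fin m → Fin n → K // LinearIndependent K H} //
        LinearMap.ker (Matrix.of H.1).mulVecLin ∈ E} : ℝ) =
      grassmannianFraction K k E * Nat.card {H : Fin m → Fin n → K // LinearIndependent K H} :=
  card_preimage_eq_of_card_fiber (card_linearIndependentKer_fiber hkmn) (Subtype.val ⁻¹' E)

end Fraction

section Models

variable {K W : Type*} [Field K] [Fintype K] [AddCommGroup W] [Module K W] [Finite W]

local notation "q" => (Fintype.card K : ℝ)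

theorem one_sub_inv_pow_le_card_linearIndependent_div {k : ℕ} (hk : k ≤ finrank K W) :
    1 - q⁻¹ ^ (finrank K W - k) ≤
      Nat.card {s : Fin k → W // LinearIndependent K s} / Nat.card (Fin k → W) := by
  set d := finrank K W
  have hq : (2 : ℝ) ≤ q := by exact_mod_cast Fintype.one_lt_card (α := K)
  have hfactor (i : ℕ) (hi : i ≤ d) :
      ((Fintype.card K ^ d - Fintype.card K ^ i : ℕ) : ℝ) / q ^ d = 1 - q⁻¹ ^ (d - i) := by
    rw [Nat.cast_sub (Nat.pow_le_pow_right Fintype.card_pos hi)]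
    push_cast
    rw [sub_div, div_self (by positivity), inv_pow, ← Nat.add_sub_cancel' hi, pow_add,
      Nat.add_sub_cancel_left, div_mul_cancel_left₀ (by positivity)]
  have hN : (Nat.card (Fin k → W) : ℝ) = ∏ _i : Fin k, q ^ d := by
    have := Fintype.ofFinite W
    rw [Nat.card_fun, Nat.card_eq_fintype_card (α := W), Module.card_eq_pow_finrank (K := K)]
    simp [d]
  rw [card_linearIndependent hk, hN, Nat.cast_prod, ← prod_div_distrib,
    Fin.prod_univ_eq_prod_range
      (fun i => ((Fintype.card K ^ d - Fintype.card K ^ i : ℕ) : ℝ) / q ^ d),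
    prod_congr rfl fun i hi => hfactor i ((mem_range.1 hi).le.trans hk)]
  exact one_sub_pow_le_prod_one_sub_pow (by positivity)
    (by rw [← div_eq_mul_inv, div_le_one (by positivity)]; exact hq) hk

theorem card_span_mem_div_le {k : ℕ} (hk : k ≤ finrank K W) (E : Set (Submodule K W)) :
    (Nat.card {G : Fin k → W // span K (Set.range G) ∈ E} : ℝ) / Nat.card (Fin k → W) ≤
      q⁻¹ ^ (finrank K W - k) + grassmannianFraction K k E := by
  have hN : (0 : ℝ) < Nat.card (Fin k → W) := by exact_mod_cast Nat.card_pos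
  have hLN : (Nat.card {G : Fin k → W // LinearIndependent K G} : ℝ) ≤ Nat.card (Fin k → W) := by
    exact_mod_cast Finite.card_subtype_le _
  have hsplit : (Nat.card {G : Fin k → W // span K (Set.range G) ∈ E} : ℝ) +
      Nat.card {G : Fin k → W // LinearIndependent K G} ≤
        Nat.card (Fin k → W) + grassmannianFraction K k E *
          Nat.card {G : Fin k → W // LinearIndependent K G} := by
    rw [← card_linearIndependent_span_mem]
    exact_mod_cast Nat.card_add_card_le_card_add_card_subtype _ _
  have hL := one_sub_inv_pow_le_card_linearIndependent_div (K := K) (W := W) hk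
  rw [le_div_iff₀ hN] at hL
  rw [div_le_iff₀ hN]
  nlinarith [grassmannianFraction_nonneg k E]

theorem grassmannianFraction_sub_le_card_ker_mem_div {k m n : ℕ} (hkmn : k + m = n)
    (E : Set (Submodule K (Fin n → K))) :
    grassmannianFraction K k E - q⁻¹ ^ k ≤
      (Nat.card {H : Fin m → Fin n → K // LinearMap.ker (Matrix.of H).mulVecLin ∈ E} : ℝ) /
        Nat.card (Fin m → Fin n → K) := by
  have hN : (0 : ℝ) < Nat.card (Fin m → Fin n → K) := by exact_mod_cast Nat.card_pos
  have hsub : Nat.card {H : {H : Fin m → Fin n → K // LinearIndependent K H} //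
        LinearMap.ker (Matrix.of H.1).mulVecLin ∈ E} ≤
      Nat.card {H : Fin m → Fin n → K // LinearMap.ker (Matrix.of H).mulVecLin ∈ E} :=
    Nat.card_le_card_of_injective (Subtype.map Subtype.val fun _ => id)
      (Subtype.map_injective _ Subtype.val_injective)
  replace hsub := (Nat.cast_le (α := ℝ)).2 hsub
  rw [card_linearIndependent_ker_mem hkmn] at hsub
  have hL := one_sub_inv_pow_le_card_linearIndependent_div (K := K) (W := Fin n → K)
    (k := m) (by rw [Module.finrank_fin_fun]; omega)
  rw [Module.finrank_fin_fun, show n - m = k by omega, le_div_iff₀ hN] at hL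
  rw [le_div_iff₀ hN]
  have hxN : 0 ≤ q⁻¹ ^ k * Nat.card (Fin m → Fin n → K) := by positivity
  nlinarith [mul_le_mul_of_nonneg_left hL (grassmannianFraction_nonneg k E),
    mul_le_mul_of_nonneg_right (grassmannianFraction_le_one k E) hxN]

end Models

/-- Lemma 3 (lem:GvsH): comparison between the generator-matrix and
parity-check-matrix models of random linear codes. For any event `E` on linear
codes, the probability (over a uniform `G ∈ F_q^{k×n}`) that the row space of `G`
lies in `E` is at most the probability (over a uniform `H ∈ F_q^{(n−k)×n}`) that
the kernel of `H` lies in `E`, plus `C·q^{−min(k,n−k)}`. -/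
theorem generator_vs_parityCheck_model :
    ∃ Cst : ℝ, 0 < Cst ∧
      ∀ (n k : ℕ) (F : Type) [Field F] [Fintype F], 1 ≤ n → k ≤ n →
        ∀ E : Set (Submodule F (Fin n → F)),
          (Nat.card {G : Fin k → Fin n → F //
              Submodule.span F (Set.range G) ∈ E} : ℝ) /
              (Nat.card (Fin k → Fin n → F) : ℝ)
            ≤ (Nat.card {H : Fin (n - k) → Fin n → F //
                LinearMap.ker (Matrix.mulVecLin (Matrix.of H)) ∈ E} : ℝ) /
                (Nat.card (Fin (n - k) → Fin n → F) : ℝ)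
              + Cst / (Fintype.card F : ℝ) ^ (min k (n - k)) := by
  refine ⟨2, two_pos, fun n k F _ _ _ hk E => ?_⟩
  have hG := card_span_mem_div_le (W := Fin n → F) (k := k) (by rwa [Module.finrank_fin_fun]) E
  have hH := grassmannianFraction_sub_le_card_ker_mem_div (K := F) (Nat.add_sub_cancel' hk) E
  rw [Module.finrank_fin_fun] at hG
  set x := (Fintype.card F : ℝ)⁻¹
  have hx0 : 0 ≤ x := by positivity
  have hx1 : x ≤ 1 := inv_le_one_of_one_le₀ (by exact_mod_cast Fintype.card_pos)
  have hmin : x ^ k + x ^ (n - k) ≤ 2 / (Fintype.card F : ℝ) ^ min k (n - k) := by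
    rw [div_eq_mul_inv, ← inv_pow]
    linarith [pow_le_pow_of_le_one hx0 hx1 (min_le_left k (n - k)),
      pow_le_pow_of_le_one hx0 hx1 (min_le_right k (n - k))]
  linarith
end

section
/- Let q be a prime power, let n ≥ 1, 0 ≤ k ≤ n and 1 ≤ u ≤ n. For a uniformly random matrix G ∈ F_q^{k×n}, let N_u := #{x ∈ F_q^n : wt(x) = u and G·xᵀ = 0} be the number of weight-u codewords in the dual code of the row space of G. Then P( |N_u − S_u/q^k| ≥ (S_u/q^k)^{3/4} ) ≤ (q−1)·(q^k/S_u)^{1/2}. -/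
/-!
Write `N G = ∑_{x ∈ S} [G x = 0]` over the Hamming sphere `S` of radius `u`, of size `S_u`.
For `x ≠ 0` the map `G ↦ G x` is a surjective homomorphism onto `F^k`, so a proportion `q^{-k}`
of the matrices kill `x`; for linearly independent `x, y` the map `G ↦ (G x, G y)` is onto
`F^{2k}`, giving `q^{-2k}`. Since `0 ∉ S`, each `x ∈ S` has at most `q - 1` partners in `S`
proportional to it. Hence `E N = μ := S_u / q^k` and `E N² ≤ μ² + (q - 1) μ`, and Chebyshev's
inequality at distance `μ^{3/4}` gives `(q - 1) μ / μ^{3/2} = (q - 1) μ^{-1/2}`.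
-/

open Finset Function Matrix

theorem AddMonoidHom.card_ker_mul_card_of_surjective {A B : Type*} [AddGroup A] [AddGroup B]
    (φ : A →+ B) (hφ : Surjective φ) : Nat.card φ.ker * Nat.card B = Nat.card A := by
  rw [← φ.ker.card_mul_index, AddSubgroup.index_ker, φ.range_eq_top_of_surjective hφ,
    AddSubgroup.card_top]

theorem Finset.sum_card_filter_sq {Ω α : Type*} [Fintype Ω] (W : Finset α) (P : Ω → α → Prop)
    [∀ ω x, Decidable (P ω x)] :
    ∑ ω, #{x ∈ W | P ω x} ^ 2 = ∑ x ∈ W, ∑ y ∈ W, #{ω | P ω x ∧ P ω y} := by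
  calc ∑ ω, #{x ∈ W | P ω x} ^ 2 = ∑ ω, #{p ∈ W ×ˢ W | P ω p.1 ∧ P ω p.2} := by
        simp only [sq, ← card_product, filter_product]
    _ = ∑ p ∈ W ×ˢ W, #{ω | P ω p.1 ∧ P ω p.2} :=
        sum_card_bipartiteAbove_eq_sum_card_bipartiteBelow _
    _ = ∑ x ∈ W, ∑ y ∈ W, #{ω | P ω x ∧ P ω y} := sum_product _ _ _

theorem Finset.card_filter_exists_smul_eq_le {K M : Type*} [Semiring K] [Fintype K]
    [AddCommMonoid M] [Module K M] [DecidableEq M] {W : Finset M} (hW : 0 ∉ W) (x : M) :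
    #{y ∈ W | ∃ a : K, a • x = y} ≤ Fintype.card K - 1 := by
  classical
  calc #{y ∈ W | ∃ a : K, a • x = y} ≤ #((univ.erase (0 : K)).image (· • x)) := by
        refine card_le_card fun y hy => ?_
        obtain ⟨hyW, a, rfl⟩ := by simpa using hy
        exact mem_image_of_mem _ (mem_erase.mpr ⟨by rintro rfl; exact hW (by simpa using hyW),
          mem_univ a⟩)
    _ ≤ #(univ.erase (0 : K)) := card_image_le
    _ = Fintype.card K - 1 := by rw [card_erase_of_mem (mem_univ _), card_univ]

theorem card_le_abs_sub_div_card_le_div_sq {Ω : Type*} [Fintype Ω] [Nonempty Ω] (f : Ω → ℝ)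
    {μ σ2 t : ℝ} (ht : 0 < t) (hmean : ∑ ω, f ω = Fintype.card Ω * μ)
    (hsq : ∑ ω, f ω ^ 2 ≤ Fintype.card Ω * (μ ^ 2 + σ2)) :
    (#{ω | t ≤ |f ω - μ|} : ℝ) / Fintype.card Ω ≤ σ2 / t ^ 2 := by
  have hvar : ∑ ω, (f ω - μ) ^ 2 ≤ Fintype.card Ω * σ2 := by
    have : ∑ ω, (f ω - μ) ^ 2 = ∑ ω, f ω ^ 2 - 2 * μ * ∑ ω, f ω + Fintype.card Ω * μ ^ 2 := by
      simp only [sub_sq, sum_add_distrib, sum_sub_distrib, sum_const, card_univ, nsmul_eq_mul,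
        ← sum_mul, ← mul_sum]
      ring
    rw [this, hmean]
    linarith
  have hcheb : (#{ω | t ≤ |f ω - μ|} : ℝ) * t ^ 2 ≤ ∑ ω, (f ω - μ) ^ 2 := by
    rw [← nsmul_eq_mul, ← sum_const]
    refine (sum_le_sum fun ω hω => ?_).trans
      (sum_le_sum_of_subset_of_nonneg (filter_subset _ _) fun _ _ _ => sq_nonneg _)
    rw [← sq_abs (f ω - μ)]
    exact pow_le_pow_left₀ ht.le (mem_filter.mp hω).2 2
  rw [div_le_div_iff₀ (by exact_mod_cast Fintype.card_pos) (by positivity)]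
  linarith

theorem div_rpow_three_div_four_sq {μ : ℝ} (hμ : 0 < μ) : μ / (μ ^ (3 / 4 : ℝ)) ^ 2 = √μ⁻¹ := by
  rw [← Real.rpow_natCast, ← Real.rpow_mul hμ.le, Real.sqrt_eq_rpow, Real.inv_rpow hμ.le,
    ← Real.rpow_neg hμ.le, div_eq_iff (by positivity), ← Real.rpow_add hμ]
  norm_num

namespace Matrix

variable {F : Type*} [Field F] {ι κ m : Type*} [Fintype ι] [Fintype m]
  [DecidableEq ι] [DecidableEq m]

theorem exists_mulVec_eq_of_linearIndependent {v : m → ι → F} (hv : LinearIndependent F v)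
    (w : m → κ → F) : ∃ A : Matrix κ ι F, ∀ j, A *ᵥ v j = w j := by
  -- a left inverse `g` of `c ↦ ∑ c j • v j` sends `v j` to `Pi.single j 1`
  obtain ⟨g, hg⟩ := (Fintype.linearCombination F v).exists_leftInverse_of_injective
    (LinearMap.ker_eq_bot.mpr (linearIndependent_iff_injective_fintypeLinearCombination.mp hv))
  refine ⟨LinearMap.toMatrix' (Fintype.linearCombination F w ∘ₗ g), fun j => ?_⟩
  have hgv : g (v j) = Pi.single j 1 := by
    simpa using LinearMap.congr_fun hg (Pi.single j 1)
  simp [LinearMap.toMatrix'_mulVec, hgv]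

variable [Fintype F] [DecidableEq F] [Fintype κ] [DecidableEq κ]

theorem card_filter_mulVec_eq_zero_mul_of_linearIndependent {v : m → ι → F}
    (hv : LinearIndependent F v) :
    #{A : Matrix κ ι F | ∀ j, A *ᵥ v j = 0} * Fintype.card F ^ (Fintype.card κ * Fintype.card m)
      = Fintype.card (Matrix κ ι F) := by
  let Φ : Matrix κ ι F →+ (m → κ → F) :=
    AddMonoidHom.mk' (fun A j => A *ᵥ v j) fun A B => funext fun j => add_mulVec A B (v j)
  have hΦ : Surjective Φ := fun w => (exists_mulVec_eq_of_linearIndependent hv w).imp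
    fun A hA => funext hA
  have hker : Nat.card Φ.ker = #{A : Matrix κ ι F | ∀ j, A *ᵥ v j = 0} := by
    rw [← Fintype.card_subtype, ← Nat.card_eq_fintype_card]
    exact Nat.card_congr (Equiv.subtypeEquivRight fun A => funext_iff)
  rw [← hker, ← Nat.card_eq_fintype_card (α := Matrix κ ι F),
    ← Φ.card_ker_mul_card_of_surjective hΦ]
  simp [Nat.card_eq_fintype_card, pow_mul]

theorem card_filter_mulVec_eq_zero {x : ι → F} (hx : x ≠ 0) :
    (#{A : Matrix κ ι F | A *ᵥ x = 0} : ℝ)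
      = Fintype.card (Matrix κ ι F) / Fintype.card F ^ Fintype.card κ := by
  rw [eq_div_iff (by positivity)]
  have h := card_filter_mulVec_eq_zero_mul_of_linearIndependent (κ := κ)
    (linearIndependent_unique_iff.mpr (by simpa using hx) : LinearIndependent F ![x])
  simp only [Fin.forall_fin_one, Matrix.cons_val_zero, Fintype.card_unique, mul_one] at h
  exact_mod_cast h

theorem card_filter_mulVec_eq_zero_and {x y : ι → F} (hx : x ≠ 0) (hxy : ∀ a : F, a • x ≠ y) :
    (#{A : Matrix κ ι F | A *ᵥ x = 0 ∧ A *ᵥ y = 0} : ℝ)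
      = Fintype.card (Matrix κ ι F) / Fintype.card F ^ (2 * Fintype.card κ) := by
  rw [eq_div_iff (by positivity)]
  have h := card_filter_mulVec_eq_zero_mul_of_linearIndependent (κ := κ)
    ((LinearIndependent.pair_iff' hx).mpr hxy)
  simp only [Fin.forall_fin_two, Matrix.cons_val_zero, Matrix.cons_val_one, Fintype.card_fin,
    mul_comm (Fintype.card κ)] at h
  exact_mod_cast h

variable {W : Finset (ι → F)}

theorem sum_card_filter_mulVec_eq_zero (hW : 0 ∉ W) :
    ∑ A : Matrix κ ι F, (#{x ∈ W | A *ᵥ x = 0} : ℝ)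
      = Fintype.card (Matrix κ ι F) * (#W / Fintype.card F ^ Fintype.card κ) := by
  calc ∑ A : Matrix κ ι F, (#{x ∈ W | A *ᵥ x = 0} : ℝ)
      = ∑ x ∈ W, (#{A : Matrix κ ι F | A *ᵥ x = 0} : ℝ) := by
        exact_mod_cast sum_card_bipartiteAbove_eq_sum_card_bipartiteBelow _
    _ = _ := by
        rw [sum_congr rfl fun x hx => card_filter_mulVec_eq_zero (ne_of_mem_of_not_mem hx hW),
          sum_const, nsmul_eq_mul]
        ring

theorem sum_card_filter_mulVec_eq_zero_and_le (hW : 0 ∉ W) {x : ι → F} (hx : x ≠ 0) :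
    ∑ y ∈ W, (#{A : Matrix κ ι F | A *ᵥ x = 0 ∧ A *ᵥ y = 0} : ℝ)
      ≤ Fintype.card (Matrix κ ι F) * ((Fintype.card F - 1) / Fintype.card F ^ Fintype.card κ
        + #W / Fintype.card F ^ (2 * Fintype.card κ)) := by
  set M : ℝ := (Fintype.card (Matrix κ ι F) : ℝ)
  set q : ℝ := (Fintype.card F : ℝ)
  have hdep : ∑ y ∈ W with ∃ a : F, a • x = y,
      (#{A : Matrix κ ι F | A *ᵥ x = 0 ∧ A *ᵥ y = 0} : ℝ) ≤ (q - 1) * (M / q ^ Fintype.card κ) :=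
    calc _ ≤ ∑ y ∈ W with ∃ a : F, a • x = y, M / q ^ Fintype.card κ :=
          sum_le_sum fun y _ => card_filter_mulVec_eq_zero (κ := κ) hx ▸
            Nat.cast_le.mpr (card_le_card (monotone_filter_right _ fun _ _ h => h.1))
      _ ≤ (q - 1) * (M / q ^ Fintype.card κ) := by
          rw [sum_const, nsmul_eq_mul]
          gcongr
          have hq : 1 ≤ Fintype.card F := Fintype.card_pos
          simpa [q, Nat.cast_sub hq] using
            (Nat.cast_le (α := ℝ)).mpr (card_filter_exists_smul_eq_le (K := F) hW x)
  have hindep : ∑ y ∈ W with ¬∃ a : F, a • x = y,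
      (#{A : Matrix κ ι F | A *ᵥ x = 0 ∧ A *ᵥ y = 0} : ℝ) ≤ #W * (M / q ^ (2 * Fintype.card κ)) :=
    calc _ = ∑ y ∈ W with ¬∃ a : F, a • x = y, M / q ^ (2 * Fintype.card κ) :=
          sum_congr rfl fun y hy => card_filter_mulVec_eq_zero_and hx
            (by simpa using (mem_filter.mp hy).2)
      _ ≤ #W * (M / q ^ (2 * Fintype.card κ)) := by
          rw [sum_const, nsmul_eq_mul]
          gcongr
          exact filter_subset _ _
  rw [← sum_filter_add_sum_filter_not W fun y => ∃ a : F, a • x = y]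
  calc _ ≤ _ := add_le_add hdep hindep
    _ = _ := by ring

theorem sum_card_filter_mulVec_eq_zero_sq_le (hW : 0 ∉ W) :
    ∑ A : Matrix κ ι F, (#{x ∈ W | A *ᵥ x = 0} : ℝ) ^ 2
      ≤ Fintype.card (Matrix κ ι F) * ((#W / Fintype.card F ^ Fintype.card κ) ^ 2
        + (Fintype.card F - 1) * (#W / Fintype.card F ^ Fintype.card κ)) := by
  calc ∑ A : Matrix κ ι F, (#{x ∈ W | A *ᵥ x = 0} : ℝ) ^ 2
      = ∑ x ∈ W, ∑ y ∈ W, (#{A : Matrix κ ι F | A *ᵥ x = 0 ∧ A *ᵥ y = 0} : ℝ) := by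
        exact_mod_cast sum_card_filter_sq W fun A x => A *ᵥ x = 0
    _ ≤ ∑ x ∈ W, (Fintype.card (Matrix κ ι F) : ℝ) * ((Fintype.card F - 1)
        / Fintype.card F ^ Fintype.card κ + #W / Fintype.card F ^ (2 * Fintype.card κ)) :=
        sum_le_sum fun x hx =>
          sum_card_filter_mulVec_eq_zero_and_le (κ := κ) hW (ne_of_mem_of_not_mem hx hW)
    _ = _ := by
        rw [sum_const, nsmul_eq_mul]
        ring

end Matrix

section HammingSphere

variable {ι β : Type*} [Fintype ι] [DecidableEq ι] [Fintype β] [Zero β] [DecidableEq β]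

theorem card_filter_support_eq (s : Finset ι) :
    #{x : ι → β | ({i | x i ≠ 0} : Finset ι) = s} = (Fintype.card β - 1) ^ #s := by
  have hpi : ({x : ι → β | ({i | x i ≠ 0} : Finset ι) = s} : Finset (ι → β))
      = Fintype.piFinset fun i => if i ∈ s then univ.erase 0 else {0} := by
    ext x
    simp only [mem_filter, mem_univ, true_and, Finset.ext_iff, Fintype.mem_piFinset]
    refine forall_congr' fun i => ?_
    split_ifs with hi <;> simp [hi]
  rw [hpi, Fintype.card_piFinset]
  simp only [apply_ite card, card_erase_of_mem (mem_univ _), card_univ, card_singleton]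
  rw [prod_ite_mem, univ_inter, prod_const]

theorem card_filter_hammingNorm_eq (u : ℕ) :
    #{x : ι → β | hammingNorm x = u} = (Fintype.card β - 1) ^ u * (Fintype.card ι).choose u := by
  rw [card_eq_sum_card_fiberwise (f := fun x : ι → β => ({i | x i ≠ 0} : Finset ι))
    (t := powersetCard u univ) fun x hx => by simpa [mem_powersetCard, hammingNorm] using hx]
  have hfiber : ∀ s ∈ powersetCard u univ, #{x ∈ ({x : ι → β | hammingNorm x = u} : Finset _) |
      ({i | x i ≠ 0} : Finset ι) = s} = (Fintype.card β - 1) ^ u := by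
    intro s hs
    rw [mem_powersetCard] at hs
    rw [filter_filter, ← hs.2, ← card_filter_support_eq]
    congr 1
    exact filter_congr fun x _ => and_iff_right_of_imp fun h => h ▸ rfl
  rw [sum_congr rfl hfiber, sum_const, card_powersetCard, card_univ, smul_eq_mul, mul_comm]

end HammingSphere

theorem dual_weight_enumerator_concentration_general
    (q n k u : ℕ) (hu1 : 1 ≤ u) (hun : u ≤ n)
    (F : Type) [Field F] [Fintype F] [DecidableEq F]
    (hF : Fintype.card F = q)
    (N : (Fin k → Fin n → F) → ℕ)
    (hN : ∀ G, N G = Nat.card {x : Fin n → F //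
        hammingNorm x = u ∧ Matrix.mulVec (Matrix.of G) x = 0})
    (Su : ℝ) (hSu : Su = (q - 1 : ℝ) ^ u * (n.choose u : ℝ)) :
    (Nat.card {G : Fin k → Fin n → F //
        (Su / (q : ℝ) ^ k) ^ ((3 : ℝ) / 4) ≤ |(N G : ℝ) - Su / (q : ℝ) ^ k|} : ℝ) /
      (Nat.card (Fin k → Fin n → F) : ℝ)
    ≤ ((q : ℝ) - 1) * Real.sqrt ((q : ℝ) ^ k / Su) := by
  subst hF
  set W : Finset (Fin n → F) := {x | hammingNorm x = u}
  have hW0 : (0 : Fin n → F) ∉ W := by simpa [W] using (Nat.one_le_iff_ne_zero.mp hu1).symm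
  have hWcard : (#W : ℝ) = Su := by
    rw [card_filter_hammingNorm_eq, hSu, Fintype.card_fin, Nat.cast_mul, Nat.cast_pow,
      Nat.cast_pred Fintype.card_pos]
  have hNW : ∀ G, N G = #{x ∈ W | of G *ᵥ x = 0} := fun G => by
    rw [hN, Nat.card_eq_fintype_card, Fintype.card_subtype, filter_filter]
  have hμ : 0 < Su / Fintype.card F ^ k := by
    have hq : (0 : ℝ) < Fintype.card F - 1 := sub_pos.mpr (by exact_mod_cast Fintype.one_lt_card)
    have := Nat.choose_pos hun
    rw [hSu]
    positivity
  have hmean := sum_card_filter_mulVec_eq_zero (κ := Fin k) hW0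
  have hsq := sum_card_filter_mulVec_eq_zero_sq_le (κ := Fin k) hW0
  rw [Fintype.card_fin, hWcard] at hmean hsq
  simp_rw [hNW, Nat.card_eq_fintype_card, Fintype.card_subtype]
  calc _ ≤ (Fintype.card F - 1) * (Su / Fintype.card F ^ k)
        / ((Su / Fintype.card F ^ k) ^ (3 / 4 : ℝ)) ^ 2 :=
        card_le_abs_sub_div_card_le_div_sq (fun G => (#{x ∈ W | of G *ᵥ x = 0} : ℝ))
          (by positivity) hmean hsq
    _ = _ := by rw [mul_div_assoc, div_rpow_three_div_four_sq hμ, inv_div]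

/-- Lemma 6 (lem:Nperp): for a uniformly random `G ∈ F_q^{k×n}`, the number `N_u`
of weight-`u` codewords in the dual of the row space of `G` satisfies
`P(|N_u − S_u/q^k| ≥ (S_u/q^k)^{3/4}) ≤ (q−1)·√(q^k/S_u)`, with `S_u = (q−1)^u·C(n,u)`. -/
theorem dual_weight_enumerator_concentration
    (q n k u : ℕ) (hq : IsPrimePow q) (hn : 1 ≤ n) (hk : k ≤ n)
    (hu1 : 1 ≤ u) (hun : u ≤ n)
    (F : Type) [Field F] [Fintype F] [DecidableEq F]
    (hF : Fintype.card F = q)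
    (N : (Fin k → Fin n → F) → ℕ)
    (hN : ∀ G, N G = Nat.card {x : Fin n → F //
        hammingNorm x = u ∧ Matrix.mulVec (Matrix.of G) x = 0})
    (Su : ℝ) (hSu : Su = (q - 1 : ℝ) ^ u * (n.choose u : ℝ)) :
    (Nat.card {G : Fin k → Fin n → F //
        (Su / (q : ℝ) ^ k) ^ ((3 : ℝ) / 4) ≤ |(N G : ℝ) - Su / (q : ℝ) ^ k|} : ℝ) /
      (Nat.card (Fin k → Fin n → F) : ℝ)
    ≤ ((q : ℝ) - 1) * Real.sqrt ((q : ℝ) ^ k / Su) :=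
  dual_weight_enumerator_concentration_general q n k u hu1 hun F hF N hN Su hSu
end

section
/- Let q ≥ 2 and n ≥ 1 be integers and let t be an integer with 1 ≤ t ≤ n/q. If x and x' are two distinct real roots of the Krawtchouk polynomial K_t(X; q, n), then |x − x'| ≥ 2. -/
open scoped BigOperators

/-- The Krawtchouk polynomial
`K_t(X; q, n) = Σ_{j=0}^t (−1)^j (q−1)^{t−j} C(X,j) C(n−X,t−j)`, where
`C(X,j) = X(X−1)⋯(X−j+1)/j!` is the polynomial binomial coefficient. -/
noncomputable def krawtchouk (q n t : ℕ) : Polynomial ℝ :=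
  ∑ j ∈ Finset.range (t + 1),
    Polynomial.C ((-1 : ℝ) ^ j * ((q : ℝ) - 1) ^ (t - j) /
        ((j.factorial : ℝ) * ((t - j).factorial : ℝ))) *
      descPochhammer ℝ j *
      ((descPochhammer ℝ (t - j)).comp (Polynomial.C (n : ℝ) - Polynomial.X))

/-!
For `i = 0, …, n` the value `K_t(i)` is the coefficient of `Z^t` in
`(1 - Z)^i (1 + (q - 1) Z)^(n - i)`. This generating function gives two facts: `K_t` is orthogonal
to every polynomial of degree `< t` for the positive weights `C(n, i) (q - 1)^i` on `0, …, n`, and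
it satisfies the three-term recurrence
`(q - 1)(n - x) K_t(x + 1) + x K_t(x - 1) = ((q - 1)(n - x) + x - q t) K_t(x)`.
Orthogonality forces `t` sign changes along `0, 1, …, n`, so `K_t` has `t` simple roots in `(0, n)`,
any two of them separated by an integer. If some roots are closer than `2`, take the leftmost such
root `a` and the next root `b`; a point `y` slightly to the right of `max a (b - 1)` then sees `K_t`
change sign on both `[y - 1, y]` and `[y, y + 1]`. Multiplying the recurrence at `y` by `K_t(y)`
makes a negative number equal to `((q - 1)(n - y) + y - q t) K_t(y)^2`, which is nonnegative as
soon as `q t ≤ n`.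
-/

open Polynomial Finset Filter Topology

namespace Polynomial

theorem coeff_one_add_C_mul_X_pow {R : Type*} [CommSemiring R] (a : R) (m k : ℕ) :
    ((1 + C a * X) ^ m).coeff k = a ^ k * m.choose k := by
  have : (1 + C a * X) ^ m = ((1 + X) ^ m).comp (C a * X) := by simp [pow_comp]
  rw [this, comp_C_mul_X_coeff, coeff_one_add_X_pow, mul_comm]

theorem coeff_X_mul_derivative {R : Type*} [CommSemiring R] (p : R[X]) (k : ℕ) :
    (X * derivative p).coeff k = k * p.coeff k := by
  cases k with
  | zero => simp
  | succ k => rw [coeff_X_mul, coeff_derivative]; push_cast; ring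

theorem eq_C_leadingCoeff_mul_prod_X_sub_C {R : Type*} [CommRing R] [IsDomain R]
    {p : R[X]} (hp : p ≠ 0) {S : Finset R} (hS : ∀ x ∈ S, p.IsRoot x) (hdeg : p.natDegree ≤ #S) :
    p = C p.leadingCoeff * ∏ x ∈ S, (X - C x) := by
  have hle : S.val ≤ p.roots :=
    (Multiset.le_iff_subset S.nodup).mpr fun x hx => (mem_roots hp).mpr (hS x hx)
  have hroots : S.val = p.roots :=
    Multiset.eq_of_le_of_card_le hle ((card_roots' p).trans hdeg)
  have hcard : Multiset.card p.roots = p.natDegree :=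
    le_antisymm (card_roots' p) (hroots ▸ hdeg)
  conv_lhs => rw [← C_leadingCoeff_mul_prod_multiset_X_sub_C hcard, ← hroots]
  rfl

end Polynomial

theorem Nat.choose_mul_descFactorial_add (s m j : ℕ) :
    (s + m).choose (s + j) * (s + j).descFactorial s = (s + m).descFactorial s * m.choose j := by
  rw [Nat.descFactorial_eq_factorial_mul_choose, Nat.descFactorial_eq_factorial_mul_choose,
    mul_left_comm, Nat.choose_mul (Nat.le_add_right s j)]
  simp [mul_assoc]

theorem sum_choose_mul_descFactorial_mul_pow_mul_pow {R : Type*} [CommSemiring R] (u v : R)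
    {n s : ℕ} (hs : s ≤ n) :
    ∑ i ∈ range (n + 1), (n.choose i * i.descFactorial s : R) * u ^ i * v ^ (n - i)
      = n.descFactorial s * u ^ s * (u + v) ^ (n - s) := by
  obtain ⟨m, rfl⟩ := Nat.exists_eq_add_of_le hs
  rw [show s + m + 1 = s + (m + 1) by ring, sum_range_add, add_pow, mul_sum,
    Nat.add_sub_cancel_left,
    sum_eq_zero fun i hi => by simp [Nat.descFactorial_eq_zero_iff_lt.mpr (mem_range.mp hi)],
    zero_add]
  refine sum_congr rfl fun j _ => ?_
  have key := congrArg (Nat.cast : ℕ → R) (Nat.choose_mul_descFactorial_add s m j)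
  push_cast at key
  rw [key, Nat.add_sub_add_left, pow_add]
  ring

theorem one_sub_X_pow_mul_one_add_C_mul_X_pow_recurrence {R : Type*} [CommRing R] (w : R)
    (i j : ℕ) :
    C (w * (j + 1)) * ((1 - X) ^ (i + 1) * (1 + C w * X) ^ j)
      + C (i : R) * ((1 - X) ^ (i - 1) * (1 + C w * X) ^ (j + 2))
      - C (w * (j + 1) + i) * ((1 - X) ^ i * (1 + C w * X) ^ (j + 1))
      = -(C (w + 1) * (X * derivative ((1 - X) ^ i * (1 + C w * X) ^ (j + 1)))) := by
  rcases i with _ | i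
  · simp [derivative_pow]
    ring
  · simp [derivative_mul, derivative_pow]
    ring

theorem exists_mem_Ico_eq_zero_of_mul_nonpos {α : Type*} [ConditionallyCompleteLinearOrder α]
    [TopologicalSpace α] [OrderTopology α] [DenselyOrdered α] {f : α → ℝ} {a b : α}
    (hab : a ≤ b) (hf : ContinuousOn f (Set.Icc a b)) (hmul : f a * f b ≤ 0) (hb : f b ≠ 0) :
    ∃ x ∈ Set.Ico a b, f x = 0 := by
  have h0 : (0 : ℝ) ∈ Set.uIcc (f a) (f b) := by
    rcases mul_nonpos_iff.mp hmul with h | h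
    · exact Set.mem_uIcc.mpr (Or.inr ⟨h.2, h.1⟩)
    · exact Set.mem_uIcc.mpr (Or.inl ⟨h.1, h.2⟩)
  rw [← Set.uIcc_of_le hab] at hf
  obtain ⟨x, hx, hfx⟩ := intermediate_value_uIcc hf h0
  rw [Set.uIcc_of_le hab] at hx
  exact ⟨x, ⟨hx.1, lt_of_le_of_ne hx.2 fun h => hb (h ▸ hfx)⟩, hfx⟩

theorem mul_nonpos_of_neg_one_pow_mul {k : ℕ} {a b c : ℝ} (ha : 0 ≤ (-1) ^ k * (c * a))
    (hb : (-1) ^ k * (c * b) < 0) : a * b ≤ 0 := by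
  have hc : c ≠ 0 := by rintro rfl; simp at hb
  have hsq : ((-1 : ℝ) ^ k) ^ 2 = 1 := by rw [← pow_mul, mul_comm, pow_mul]; norm_num
  have hprod : c ^ 2 * (a * b) ≤ 0 := by
    calc c ^ 2 * (a * b) = ((-1) ^ k * (c * a)) * ((-1) ^ k * (c * b)) := by
          linear_combination (-(c ^ 2 * (a * b))) * hsq
      _ ≤ 0 := mul_nonpos_of_nonneg_of_nonpos ha hb.le
  exact nonpos_of_mul_nonpos_right hprod (by positivity)

/-- `S` is the set of sign changes of `s` along `0, 1, …, n`. -/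
theorem exists_signChanges (s : ℕ → ℝ) (n : ℕ) :
    ∃ S ⊆ Ioc 0 n, (∀ i ≤ n, 0 ≤ (-1) ^ #{c ∈ S | c ≤ i} * (s 0 * s i)) ∧
      ∀ c ∈ S, s (c - 1) * s c ≤ 0 ∧ s c ≠ 0 := by
  induction n with
  | zero => exact ⟨∅, by simp, fun i hi => by simp [Nat.le_zero.mp hi, mul_self_nonneg], by simp⟩
  | succ n ih =>
    obtain ⟨S, hSsub, hsign, hchange⟩ := ih
    have hle (c : ℕ) (hc : c ∈ S) : c ≤ n := (mem_Ioc.mp (hSsub hc)).2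
    have hSsub' : S ⊆ Ioc 0 (n + 1) := hSsub.trans (Ioc_subset_Ioc_right n.le_succ)
    have hsign_n : 0 ≤ (-1) ^ #S * (s 0 * s n) := by
      simpa only [filter_true_of_mem hle] using hsign n le_rfl
    by_cases hkeep : 0 ≤ (-1) ^ #S * (s 0 * s (n + 1))
    · refine ⟨S, hSsub', fun i hi => ?_, hchange⟩
      rcases hi.lt_or_eq with hi | rfl
      · exact hsign i (Nat.lt_succ_iff.mp hi)
      · rwa [filter_true_of_mem fun c hc => (hle c hc).trans n.le_succ]
    · rw [not_le] at hkeep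
      have hnS : n + 1 ∉ S := fun h => by simpa using hle _ h
      refine ⟨insert (n + 1) S, insert_subset (by simp) hSsub', fun i hi => ?_, fun c hc => ?_⟩
      · rcases hi.lt_or_eq with hi | rfl
        · rw [filter_insert, if_neg (by omega)]
          exact hsign i (Nat.lt_succ_iff.mp hi)
        · have hall (c : ℕ) (hc : c ∈ insert (n + 1) S) : c ≤ n + 1 :=
            (mem_insert.mp hc).elim le_of_eq fun hc => (hle c hc).trans n.le_succ
          rw [filter_true_of_mem hall, card_insert_of_notMem hnS, pow_succ]
          linarith
      · obtain rfl | hc := mem_insert.mp hc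
        · rw [Nat.add_sub_cancel]
          exact ⟨mul_nonpos_of_neg_one_pow_mul hsign_n hkeep, fun h => by simp [h] at hkeep⟩
        · exact hchange c hc

theorem neg_one_pow_mul_prod_sub_half_pos (S : Finset ℕ) (i : ℕ) :
    0 < (-1) ^ #{c ∈ S | i < c} * ∏ c ∈ S, ((i : ℝ) - (c - 1 / 2)) := by
  rw [← prod_filter_mul_prod_filter_not S (i < ·), ← mul_assoc, ← prod_neg]
  refine mul_pos (prod_pos fun c hc => ?_) (prod_pos fun c hc => ?_)
  · have : (i : ℝ) + 1 ≤ c := by exact_mod_cast (mem_filter.mp hc).2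
    linarith
  · have : (c : ℝ) ≤ i := by exact_mod_cast not_lt.mp (mem_filter.mp hc).2
    linarith

theorem le_card_of_forall_sum_mul_eval_eq_zero {n t : ℕ} {w s : ℕ → ℝ} (hw : ∀ i ≤ n, 0 < w i)
    (hs0 : s 0 ≠ 0)
    (horth : ∀ g ∈ degreeLT ℝ t, ∑ i ∈ range (n + 1), w i * s i * g.eval (i : ℝ) = 0)
    {S : Finset ℕ} (hS : ∀ i ≤ n, 0 ≤ (-1) ^ #{c ∈ S | c ≤ i} * (s 0 * s i)) : t ≤ #S := by
  by_contra! hlt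
  set g : ℝ[X] := ∏ c ∈ S, (X - C ((c : ℝ) - 1 / 2))
  have hg : g ∈ degreeLT ℝ t := by
    rw [mem_degreeLT,
      degree_eq_natDegree (monic_prod_of_monic _ _ fun c _ => monic_X_sub_C _).ne_zero,
      natDegree_finsetProd_X_sub_C_eq_card]
    exact_mod_cast hlt
  -- `g` changes sign at each `c - 1 / 2` with `c ∈ S`, like `s` does at `c`
  have hterm (i : ℕ) (hi : i ≤ n) : 0 ≤ w i * ((-1) ^ #{c ∈ S | c ≤ i} * (s 0 * s i)) *
      ((-1) ^ #{c ∈ S | i < c} * g.eval (i : ℝ)) := by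
    refine mul_nonneg (mul_nonneg (hw i hi).le (hS i hi)) (le_of_lt ?_)
    simpa [g, eval_prod] using neg_one_pow_mul_prod_sub_half_pos S i
  have hsplit (i : ℕ) : (-1 : ℝ) ^ #S = (-1) ^ #{c ∈ S | c ≤ i} * (-1) ^ #{c ∈ S | i < c} := by
    rw [← pow_add, ← card_filter_add_card_filter_not (· ≤ i)]
    simp only [not_le]
  have hpos : 0 < ∑ i ∈ range (n + 1), w i * ((-1) ^ #{c ∈ S | c ≤ i} * (s 0 * s i)) *
      ((-1) ^ #{c ∈ S | i < c} * g.eval (i : ℝ)) := by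
    refine sum_pos' (fun i hi => hterm i (Nat.lt_succ_iff.mp (mem_range.mp hi)))
      ⟨0, by simp, lt_of_le_of_ne (hterm 0 (Nat.zero_le n)) (Ne.symm ?_)⟩
    have hg0 : g.eval 0 ≠ 0 := by
      simpa [g, eval_prod] using (neg_one_pow_mul_prod_sub_half_pos S 0).ne'
    simp [hs0, hg0, (hw 0 (Nat.zero_le n)).ne']
  have hzero : ∑ i ∈ range (n + 1), w i * ((-1) ^ #{c ∈ S | c ≤ i} * (s 0 * s i)) *
      ((-1) ^ #{c ∈ S | i < c} * g.eval (i : ℝ)) = (-1) ^ #S * s 0 *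
        ∑ i ∈ range (n + 1), w i * s i * g.eval (i : ℝ) := by
    rw [mul_sum]
    refine sum_congr rfl fun i _ => ?_
    rw [hsplit i]
    ring
  rw [hzero, horth g hg, mul_zero] at hpos
  exact lt_irrefl 0 hpos

theorem exists_finset_zeros_of_signChanges {f : ℝ → ℝ} (hf : Continuous f) (h0 : f 0 ≠ 0)
    {n : ℕ} {S : Finset ℕ} (hS : S ⊆ Ioc 0 n)
    (hchange : ∀ c ∈ S, f ↑(c - 1) * f c ≤ 0 ∧ f c ≠ 0) :
    ∃ R : Finset ℝ, #R = #S ∧ (∀ ρ ∈ R, f ρ = 0 ∧ 0 < ρ ∧ ρ < n) ∧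
      ∀ a ∈ R, ∀ b ∈ R, a < b → ∃ m : ℤ, a < m ∧ m < b := by
  have hzero (c : ℕ) (hc : c ∈ S) : ∃ ρ ∈ Set.Ico ((c : ℝ) - 1) c, f ρ = 0 := by
    have hcast : ((c - 1 : ℕ) : ℝ) = c - 1 := by
      rw [Nat.cast_sub (mem_Ioc.mp (hS hc)).1, Nat.cast_one]
    exact exists_mem_Ico_eq_zero_of_mul_nonpos (by linarith) hf.continuousOn
      (hcast ▸ (hchange c hc).1) (hchange c hc).2
  choose! ρ hρ hfρ using hzero
  have hsep (c : ℕ) (hc : c ∈ S) (d : ℕ) (hd : d ∈ S) (hcd : c < d) : ρ c < c ∧ (c : ℝ) < ρ d := by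
    have hcd' : (c : ℝ) + 1 ≤ d := by exact_mod_cast hcd
    refine ⟨(hρ c hc).2, lt_of_le_of_ne (by linarith [(hρ d hd).1]) fun h => ?_⟩
    exact (hchange c hc).2 (h ▸ hfρ d hd)
  refine ⟨S.image ρ, card_image_of_injOn fun c hc d hd hρcd => ?_, ?_, ?_⟩
  · by_contra hne
    rcases lt_or_gt_of_ne hne with h | h
    · linarith [hsep c hc d hd h]
    · linarith [hsep d hd c hc h]
  · simp only [mem_image]
    rintro _ ⟨c, hc, rfl⟩
    obtain ⟨hc0, hcn⟩ := mem_Ioc.mp (hS hc)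
    have hc1 : (1 : ℝ) ≤ c := by exact_mod_cast hc0
    refine ⟨hfρ c hc, lt_of_le_of_ne (by linarith [(hρ c hc).1]) fun h => h0 (h ▸ hfρ c hc), ?_⟩
    exact (hρ c hc).2.trans_le (by exact_mod_cast hcn)
  · simp only [mem_image]
    rintro _ ⟨c, hc, rfl⟩ _ ⟨d, hd, rfl⟩ hlt
    rcases lt_trichotomy c d with h | rfl | h
    · exact ⟨c, by simpa using hsep c hc d hd h⟩
    · exact absurd hlt (lt_irrefl _)
    · linarith [hsep d hd c hc h]

theorem eval_mul_eval_neg_of_unique_root {c : ℝ} (hc : c ≠ 0) {R : Finset ℝ} {u v a : ℝ}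
    (ha : a ∈ R) (hua : u < a) (hav : a < v) (hR : ∀ ρ ∈ R, ρ ≠ a → ρ < u ∨ v < ρ) :
    (C c * ∏ ρ ∈ R, (X - C ρ)).eval u * (C c * ∏ ρ ∈ R, (X - C ρ)).eval v < 0 := by
  simp only [eval_mul, eval_C, eval_prod, eval_sub, eval_X]
  have hrest : 0 < ∏ ρ ∈ R.erase a, ((u - ρ) * (v - ρ)) := prod_pos fun ρ hρ => by
    rcases hR ρ (mem_of_mem_erase hρ) (ne_of_mem_erase hρ) with h | h
    · exact mul_pos (by linarith) (by linarith)
    · exact mul_pos_of_neg_of_neg (by linarith) (by linarith)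
  calc (c * ∏ ρ ∈ R, (u - ρ)) * (c * ∏ ρ ∈ R, (v - ρ))
      = c * c * ((u - a) * (v - a) * ∏ ρ ∈ R.erase a, ((u - ρ) * (v - ρ))) := by
        rw [mul_prod_erase R (fun ρ => (u - ρ) * (v - ρ)) ha, prod_mul_distrib]
        ring
    _ < 0 := mul_neg_of_pos_of_neg (mul_self_pos.mpr hc)
        (mul_neg_of_neg_of_pos (mul_neg_of_neg_of_pos (by linarith) (by linarith)) hrest)

theorem exists_window_of_close_roots {R : Finset ℝ}
    (hint : ∀ a ∈ R, ∀ b ∈ R, a < b → ∃ m : ℤ, a < m ∧ m < b) {a b : ℝ} (ha : a ∈ R) (hb : b ∈ R)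
    (hab : a < b) (hba : b < a + 2) (hleft : ∀ ρ ∈ R, ρ < a → ρ + 2 ≤ a)
    (hmid : ∀ ρ ∈ R, a < ρ → b ≤ ρ) :
    ∃ y, a < y ∧ y < b ∧ y < a + 1 ∧ b < y + 1 ∧
      ∀ ρ ∈ R, ρ < y - 1 ∨ ρ = a ∨ ρ = b ∨ y + 1 < ρ := by
  have hright (ρ : ℝ) (hρ : ρ ∈ R) (hlt : b < ρ) : a + 1 < ρ := by
    obtain ⟨m₁, hm₁, hm₁'⟩ := hint a ha b hb hab
    obtain ⟨m₂, hm₂, hm₂'⟩ := hint b hb ρ hρ hlt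
    have : (m₁ : ℝ) + 1 ≤ m₂ := by
      exact_mod_cast Int.add_one_le_of_lt (by exact_mod_cast hm₁'.trans hm₂)
    linarith
  -- every `y` slightly to the right of `max a (b - 1)` works
  set L := max a (b - 1)
  have hroot_ev (ρ : ℝ) (hρ : ρ ∈ R) :
      ∀ᶠ y in 𝓝[>] L, ρ < y - 1 ∨ ρ = a ∨ ρ = b ∨ y + 1 < ρ := by
    rcases lt_trichotomy ρ a with h | rfl | h
    · filter_upwards [self_mem_nhdsWithin] with y hy
      exact Or.inl (by linarith [hleft ρ hρ h, le_max_left a (b - 1), Set.mem_Ioi.mp hy])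
    · exact Eventually.of_forall fun _ => Or.inr (Or.inl rfl)
    rcases (hmid ρ hρ h).eq_or_lt with rfl | h'
    · exact Eventually.of_forall fun _ => Or.inr (Or.inr (Or.inl rfl))
    · have : L < ρ - 1 := max_lt (by linarith [hright ρ hρ h']) (by linarith)
      filter_upwards [nhdsWithin_le_nhds (eventually_lt_nhds this)] with y hy
      exact Or.inr (Or.inr (Or.inr (by linarith)))
  have hev : ∀ᶠ y in 𝓝[>] L, L < y ∧ y < b ∧ y < a + 1 ∧
      ∀ ρ ∈ R, ρ < y - 1 ∨ ρ = a ∨ ρ = b ∨ y + 1 < ρ := by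
    filter_upwards [self_mem_nhdsWithin,
      nhdsWithin_le_nhds (eventually_lt_nhds (max_lt hab (by linarith) : L < b)),
      nhdsWithin_le_nhds (eventually_lt_nhds (max_lt (by linarith) (by linarith) : L < a + 1)),
      (eventually_all_finset R).mpr hroot_ev] with y h₁ h₂ h₃ h₄ using ⟨h₁, h₂, h₃, h₄⟩
  obtain ⟨y, hLy, hyb, hya, hyR⟩ := hev.exists
  exact ⟨y, (le_max_left _ _).trans_lt hLy, hyb, hya,
    by linarith [le_max_right a (b - 1)], hyR⟩

theorem two_le_sub_of_roots {p : ℝ[X]} {c : ℝ} (hc : c ≠ 0) {R : Finset ℝ}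
    (hp : p = C c * ∏ ρ ∈ R, (X - C ρ)) {N : ℝ} (hR : ∀ ρ ∈ R, 0 < ρ ∧ ρ < N)
    (hint : ∀ a ∈ R, ∀ b ∈ R, a < b → ∃ m : ℤ, a < m ∧ m < b)
    (hsign : ∀ y, 0 < y → y < N → 0 ≤ p.eval (y - 1) * p.eval y ∨ 0 ≤ p.eval y * p.eval (y + 1))
    {a b : ℝ} (ha : a ∈ R) (hb : b ∈ R) (hab : a < b) : 2 ≤ b - a := by
  by_contra! hgap
  set B := R.filter fun a => ∃ b ∈ R, a < b ∧ b < a + 2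
  have hB : B.Nonempty := ⟨a, mem_filter.mpr ⟨ha, b, hb, hab, by linarith⟩⟩
  set a₀ := B.min' hB
  obtain ⟨ha₀, b₁, hb₁, hab₁, hb₁a₀⟩ := mem_filter.mp (B.min'_mem hB)
  have hleft (ρ : ℝ) (hρ : ρ ∈ R) (hlt : ρ < a₀) : ρ + 2 ≤ a₀ := by
    by_contra! h
    exact (B.min'_le ρ (mem_filter.mpr ⟨hρ, a₀, ha₀, hlt, h⟩)).not_gt hlt
  set A := R.filter (a₀ < ·)
  have hA : A.Nonempty := ⟨b₁, mem_filter.mpr ⟨hb₁, hab₁⟩⟩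
  set b₀ := A.min' hA
  obtain ⟨hb₀, hab₀⟩ := mem_filter.mp (A.min'_mem hA)
  obtain ⟨y, ha₀y, hyb₀, hya₀, hb₀y, hyR⟩ := exists_window_of_close_roots hint ha₀ hb₀ hab₀
    ((A.min'_le b₁ (mem_filter.mpr ⟨hb₁, hab₁⟩)).trans_lt hb₁a₀) hleft
    fun ρ hρ hlt => A.min'_le ρ (mem_filter.mpr ⟨hρ, hlt⟩)
  have hleft_change : p.eval (y - 1) * p.eval y < 0 := by
    rw [hp]
    refine eval_mul_eval_neg_of_unique_root hc ha₀ (by linarith) ha₀y fun ρ hρ hne => ?_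
    rcases hyR ρ hρ with h | h | h | h
    exacts [Or.inl h, absurd h hne, Or.inr (h ▸ hyb₀), Or.inr (by linarith)]
  have hright_change : p.eval y * p.eval (y + 1) < 0 := by
    rw [hp]
    refine eval_mul_eval_neg_of_unique_root hc hb₀ hyb₀ hb₀y fun ρ hρ hne => ?_
    rcases hyR ρ hρ with h | h | h | h
    exacts [Or.inl (by linarith), Or.inl (h ▸ ha₀y), absurd h hne, Or.inr h]
  rcases hsign y (by linarith [(hR a₀ ha₀).1]) (by linarith [(hR b₀ hb₀).2]) with h | h <;>
    linarith

theorem natDegree_krawtchouk_le (q n t : ℕ) : (krawtchouk q n t).natDegree ≤ t := by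
  refine natDegree_sum_le_of_forall_le _ _ fun j hj => ?_
  have hjt : j ≤ t := Nat.lt_succ_iff.mp (mem_range.mp hj)
  have hlin : (C (n : ℝ) - X).natDegree ≤ 1 := by compute_degree
  calc _ ≤ j + (t - j) :=
        natDegree_mul_le_of_le ((natDegree_C_mul_le _ _).trans (descPochhammer_natDegree ℝ j).le)
          (natDegree_comp_le.trans (by rw [descPochhammer_natDegree]; nlinarith))
    _ = t := by omega

theorem krawtchouk_eval_natCast (q n t : ℕ) {i : ℕ} (hi : i ≤ n) :
    (krawtchouk q n t).eval (i : ℝ) =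
      ((1 - X) ^ i * (1 + C ((q : ℝ) - 1) * X) ^ (n - i)).coeff t := by
  have h1X : (1 - X : ℝ[X]) = 1 + C (-1) * X := by simp [sub_eq_add_neg]
  rw [coeff_mul, Nat.sum_antidiagonal_eq_sum_range_succ_mk, krawtchouk, eval_finsetSum]
  refine sum_congr rfl fun j _ => ?_
  simp only [eval_mul, eval_C, eval_comp, eval_sub, eval_X, h1X, coeff_one_add_C_mul_X_pow]
  rw [← Nat.cast_sub hi, descPochhammer_eval_eq_descFactorial,
    descPochhammer_eval_eq_descFactorial, Nat.descFactorial_eq_factorial_mul_choose,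
    Nat.descFactorial_eq_factorial_mul_choose]
  push_cast
  field_simp

theorem krawtchouk_eval_zero_pos (q n t : ℕ) (hq : 2 ≤ q) (htn : t ≤ n) :
    0 < (krawtchouk q n t).eval 0 := by
  have h := krawtchouk_eval_natCast q n t (Nat.zero_le n)
  rw [Nat.cast_zero, pow_zero, one_mul, Nat.sub_zero, coeff_one_add_C_mul_X_pow] at h
  have hq' : (1 : ℝ) < q := by exact_mod_cast hq
  rw [h]
  exact mul_pos (pow_pos (by linarith) t) (by exact_mod_cast Nat.choose_pos htn)

theorem krawtchouk_recurrence_natCast (q n t : ℕ) {x : ℕ} (hx : x + 1 ≤ n) :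
    ((q : ℝ) - 1) * (n - x) * (krawtchouk q n t).eval ((x : ℝ) + 1)
      + x * (krawtchouk q n t).eval ((x : ℝ) - 1)
      = (((q : ℝ) - 1) * (n - x) + x - q * t) * (krawtchouk q n t).eval (x : ℝ) := by
  have key := congrArg (coeff · t)
    (one_sub_X_pow_mul_one_add_C_mul_X_pow_recurrence ((q : ℝ) - 1) x (n - x - 1))
  simp only [coeff_add, coeff_sub, coeff_C_mul, coeff_neg, coeff_X_mul_derivative] at key
  have hprev : (x : ℝ) * (krawtchouk q n t).eval ((x : ℝ) - 1) =
      x * ((1 - X) ^ (x - 1) * (1 + C ((q : ℝ) - 1) * X) ^ (n - x - 1 + 2)).coeff t := by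
    rcases x with _ | x
    · simp
    · rw [Nat.cast_succ, add_sub_cancel_right, krawtchouk_eval_natCast q n t (by omega),
        show n - (x + 1) - 1 + 2 = n - x by omega, Nat.add_sub_cancel]
  have hnext := krawtchouk_eval_natCast q n t hx
  have hcur := krawtchouk_eval_natCast q n t (i := x) (by omega)
  rw [show n - (x + 1) = n - x - 1 by omega] at hnext
  rw [show n - x = n - x - 1 + 1 by omega] at hcur
  have hcast : ((n - x - 1 : ℕ) : ℝ) + 1 = n - x := by
    rw [Nat.cast_sub (by omega), Nat.cast_sub (by omega)]; push_cast; ring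
  push_cast at hnext
  rw [hnext, hprev, hcur]
  rw [hcast] at key
  linear_combination key

theorem krawtchouk_recurrence (q n t : ℕ) (htn : t + 2 ≤ n) (y : ℝ) :
    ((q : ℝ) - 1) * (n - y) * (krawtchouk q n t).eval (y + 1)
      + y * (krawtchouk q n t).eval (y - 1)
      = (((q : ℝ) - 1) * (n - y) + y - q * t) * (krawtchouk q n t).eval y := by
  set K := krawtchouk q n t
  have hK := natDegree_krawtchouk_le q n t
  have hlin : (C ((q : ℝ) - 1) * (C (n : ℝ) - X)).natDegree ≤ 1 := by compute_degree
  have hshift (c : ℝ) : (K.comp (X + C c)).natDegree ≤ t := by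
    rw [natDegree_comp, natDegree_X_add_C, mul_one]; exact hK
  have hpoly : C ((q : ℝ) - 1) * (C (n : ℝ) - X) * K.comp (X + C 1) + X * K.comp (X + C (-1))
      = (C ((q : ℝ) - 1) * (C (n : ℝ) - X) + X - C ((q : ℝ) * t)) * K := by
    refine eq_of_natDegree_lt_card_of_eval_eq _ _ (f := fun i : Fin n => ((i : ℕ) : ℝ))
      (fun i j h => Fin.ext (Nat.cast_injective h)) (fun i => ?_) ?_
    · have := krawtchouk_recurrence_natCast q n t i.isLt
      simp only [eval_add, eval_mul, eval_C, eval_sub, eval_X, eval_comp]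
      rw [← sub_eq_add_neg]
      linear_combination this
    · rw [Fintype.card_fin]
      refine max_lt (lt_of_le_of_lt (natDegree_add_le_of_degree_le (n := 1 + t) ?_ ?_) (by omega))
        (lt_of_le_of_lt (natDegree_mul_le_of_le (m := 1) ?_ hK) (by omega))
      · exact natDegree_mul_le_of_le hlin (hshift 1)
      · exact natDegree_mul_le_of_le natDegree_X_le (hshift (-1))
      · exact (natDegree_sub_le_of_le (natDegree_add_le_of_degree_le hlin natDegree_X_le)
          (natDegree_C _).le).trans (by simp)
  have := congrArg (eval y) hpoly
  simp only [eval_add, eval_mul, eval_C, eval_sub, eval_X, eval_comp] at this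
  rw [← sub_eq_add_neg] at this
  linear_combination this

theorem krawtchouk_no_double_signChange (q n t : ℕ) (hq : 2 ≤ q) (hqt : q * t ≤ n) (htn : t + 2 ≤ n)
    {y : ℝ} (hy0 : 0 < y) (hyn : y < n) :
    0 ≤ (krawtchouk q n t).eval (y - 1) * (krawtchouk q n t).eval y ∨
      0 ≤ (krawtchouk q n t).eval y * (krawtchouk q n t).eval (y + 1) := by
  set K := krawtchouk q n t
  by_contra! h
  have hq' : (2 : ℝ) ≤ q := by exact_mod_cast hq
  have hqt' : (q : ℝ) * t ≤ n := by exact_mod_cast hqt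
  have hA : 0 < ((q : ℝ) - 1) * (n - y) := mul_pos (by linarith) (by linarith)
  -- `(q - 1)(n - y) + y - qt ≥ (q - 1)n - (q - 2)n - qt = n - qt ≥ 0`
  have hB : 0 ≤ ((q : ℝ) - 1) * (n - y) + y - q * t := by
    nlinarith [mul_nonneg (by linarith : (0 : ℝ) ≤ q - 2) (by linarith : (0 : ℝ) ≤ n - y)]
  have hrec := congrArg (· * K.eval y) (krawtchouk_recurrence q n t htn y)
  nlinarith [mul_neg_of_pos_of_neg hA (mul_comm (K.eval y) _ ▸ h.2), mul_neg_of_pos_of_neg hy0 h.1,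
    mul_nonneg hB (mul_self_nonneg (K.eval y))]

theorem krawtchouk_orthogonal_descPochhammer (q n t : ℕ) {s : ℕ} (hst : s < t) (hsn : s ≤ n) :
    ∑ i ∈ range (n + 1), (n.choose i : ℝ) * ((q : ℝ) - 1) ^ i * (krawtchouk q n t).eval (i : ℝ)
      * (descPochhammer ℝ s).eval (i : ℝ) = 0 := by
  set w : ℝ := q - 1
  have hsum := congrArg (coeff · t)
    (sum_choose_mul_descFactorial_mul_pow_mul_pow (C w * (1 - X)) (1 + C w * X) hsn)
  simp only [finsetSum_coeff] at hsum
  rw [show C w * (1 - X) + (1 + C w * X) = C (w + 1) by rw [map_add, C_1]; ring,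
    coeff_eq_zero_of_natDegree_lt (p := _ * _ * _) (by compute_degree; exact hst)] at hsum
  rw [← hsum]
  refine sum_congr rfl fun i hi => ?_
  rw [krawtchouk_eval_natCast q n t (Nat.lt_succ_iff.mp (mem_range.mp hi)),
    descPochhammer_eval_eq_descFactorial, mul_pow, ← C_pow, ← Nat.cast_mul, ← C_eq_natCast]
  simp only [mul_assoc, coeff_C_mul]
  push_cast
  ring

theorem krawtchouk_orthogonal (q n t : ℕ) (htn : t ≤ n) {g : ℝ[X]} (hg : g ∈ degreeLT ℝ t) :
    ∑ i ∈ range (n + 1), (n.choose i : ℝ) * ((q : ℝ) - 1) ^ i * (krawtchouk q n t).eval (i : ℝ)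
      * g.eval (i : ℝ) = 0 := by
  let S : Sequence ℝ := ⟨descPochhammer ℝ, fun i => by
    rw [degree_eq_natDegree (monic_descPochhammer ℝ i).ne_zero, descPochhammer_natDegree]⟩
  rw [← S.span_degreeLT fun i _ => by simp [S, (monic_descPochhammer ℝ i).leadingCoeff]] at hg
  induction hg using Submodule.span_induction with
  | mem g hg =>
    obtain ⟨s, hs, rfl⟩ := hg
    exact krawtchouk_orthogonal_descPochhammer q n t hs (by have := Set.mem_Iio.mp hs; omega)
  | zero => simp
  | add g h _ _ hg hh => simp only [eval_add, mul_add, sum_add_distrib, hg, hh, add_zero]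
  | smul a g _ hg => simp only [eval_smul, smul_eq_mul, mul_left_comm _ a, ← mul_sum, hg, mul_zero]

theorem krawtchouk_eq_prod_roots (q n t : ℕ) (hq : 2 ≤ q) (htn : t ≤ n) :
    ∃ c ≠ 0, ∃ R : Finset ℝ, #R = t ∧ krawtchouk q n t = C c * ∏ ρ ∈ R, (X - C ρ) ∧
      (∀ ρ ∈ R, 0 < ρ ∧ ρ < n) ∧ ∀ a ∈ R, ∀ b ∈ R, a < b → ∃ m : ℤ, a < m ∧ m < b := by
  have hK0 := krawtchouk_eval_zero_pos q n t hq htn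
  have hK : krawtchouk q n t ≠ 0 := fun h => hK0.ne' (h ▸ eval_zero)
  have hw (i : ℕ) (hi : i ≤ n) : 0 < (n.choose i : ℝ) * ((q : ℝ) - 1) ^ i := by
    have hq' : (1 : ℝ) < q := by exact_mod_cast hq
    exact mul_pos (by exact_mod_cast Nat.choose_pos hi) (pow_pos (by linarith) i)
  obtain ⟨S, hS, hsign, hchange⟩ :=
    exists_signChanges (fun i => (krawtchouk q n t).eval (i : ℝ)) n
  have htS : t ≤ #S :=
    le_card_of_forall_sum_mul_eval_eq_zero (s := fun i => (krawtchouk q n t).eval (i : ℝ)) hw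
      (by simpa using hK0.ne')
      (fun g hg => by simpa only [mul_assoc] using krawtchouk_orthogonal q n t htn hg) hsign
  obtain ⟨R, hRS, hroots, hint⟩ :=
    exists_finset_zeros_of_signChanges (krawtchouk q n t).continuous hK0.ne' hS hchange
  have hdeg := natDegree_krawtchouk_le q n t
  have hprod := eq_C_leadingCoeff_mul_prod_X_sub_C hK (fun ρ hρ => (hroots ρ hρ).1) (by omega)
  have hdegR : (krawtchouk q n t).natDegree = #R := by
    conv_lhs => rw [hprod]
    rw [natDegree_C_mul (leadingCoeff_ne_zero.mpr hK), natDegree_finsetProd_X_sub_C_eq_card]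
  exact ⟨_, leadingCoeff_ne_zero.mpr hK, R, by omega, hprod, fun ρ hρ => (hroots ρ hρ).2, hint⟩

theorem krawtchouk_roots_spacing_general
    (q n t : ℕ) (hq : 2 ≤ q)
    (htn : (t : ℝ) ≤ (n : ℝ) / (q : ℝ))
    (x x' : ℝ)
    (hx : (krawtchouk q n t).eval x = 0)
    (hx' : (krawtchouk q n t).eval x' = 0)
    (hne : x ≠ x') :
    2 ≤ |x - x'| := by
  have hqt : q * t ≤ n := by
    have : (t : ℝ) * q ≤ n := (le_div_iff₀ (by positivity)).mp htn
    exact_mod_cast (by push_cast; linarith : ((q * t : ℕ) : ℝ) ≤ n)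
  obtain ⟨c, hc, R, hRt, hK, hR, hint⟩ := krawtchouk_eq_prod_roots q n t hq (by nlinarith)
  have hmem (z : ℝ) (hz : (krawtchouk q n t).eval z = 0) : z ∈ R := by
    rw [hK, eval_mul, eval_C, eval_prod, mul_eq_zero, prod_eq_zero_iff] at hz
    obtain ⟨ρ, hρ, hzρ⟩ := hz.resolve_left hc
    simpa [sub_eq_zero.mp (by simpa using hzρ)] using hρ
  have ht2 : 2 ≤ t := hRt ▸ one_lt_card.mpr ⟨x, hmem x hx, x', hmem x' hx', hne⟩
  have hsign := fun y => krawtchouk_no_double_signChange q n t hq hqt (by nlinarith) (y := y)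
  rw [hK] at hsign
  rcases hne.lt_or_gt with h | h
  · rw [abs_sub_comm, abs_of_pos (sub_pos.mpr h)]
    exact two_le_sub_of_roots hc rfl hR hint hsign (hmem x hx) (hmem x' hx') h
  · rw [abs_of_pos (sub_pos.mpr h)]
    exact two_le_sub_of_roots hc rfl hR hint hsign (hmem x' hx') (hmem x hx) h

/-- Lemma 14 (lemma:distRoot): for `1 ≤ t ≤ n/q`, distinct real roots of the
Krawtchouk polynomial `K_t(X; q, n)` are at distance at least `2`. -/
theorem krawtchouk_roots_spacing
    (q n t : ℕ) (hq : 2 ≤ q) (hn : 1 ≤ n)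
    (ht1 : 1 ≤ t) (htn : (t : ℝ) ≤ (n : ℝ) / (q : ℝ))
    (x x' : ℝ)
    (hx : (krawtchouk q n t).eval x = 0)
    (hx' : (krawtchouk q n t).eval x' = 0)
    (hne : x ≠ x') :
    2 ≤ |x - x'| :=
  krawtchouk_roots_spacing_general q n t hq htn x x' hx hx' hne
end

section
/- Let q = p^s be a prime power, n ≥ 1, and let τ ∈ [0, (q−1)/q]. Set τ^⊥ := (√((q−1)(1−τ)) − √τ)²/q. Then for every y ∈ F_q^n with wt(y) = w: q^{−n/2}·Σ_{e ∈ F_q^n} (1−τ)^{(n−wt(e))/2}·(τ/(q−1))^{wt(e)/2}·χ_y(e) = (1−τ^⊥)^{(n−w)/2}·(τ^⊥/(q−1))^{w/2}. -/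
/-!
Both sides factor over the coordinates. The weight of `e` is `∏ i, f (e i)` with `f 0 = a := √(1-τ)`
and `f x = b := √(τ/(q-1))` for `x ≠ 0`, and `χ_y(e) = ∏ i, ψ (e i * y i)` for the primitive
character `ψ = exp(2πi·Tr(·)/p)` of `F_q`. So the sum is `∏ i, f̂ (y i)`, and orthogonality of `ψ`
gives `f̂ 0 = a + (q-1) b` and `f̂ t = a - b` for `t ≠ 0`. It remains to recognise
`(a + (q-1) b)/√q` and `(a - b)/√q` as `√(1-τ^⊥)` and `√(τ^⊥/(q-1))`; the latter needs
`b ≤ a`, which is `τ ≤ (q-1)/q`.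
-/

open scoped BigOperators

/-- The additive character `χ_y(x) = exp(2πi·Tr(x·y)/p)` on `F_q^n`, where
`Tr : F_q → F_p` is the absolute trace. -/
noncomputable def chiChar (p : ℕ) {n : ℕ} (F : Type*) [Field F] [Algebra (ZMod p) F]
    (y x : Fin n → F) : ℂ :=
  Complex.exp (2 * Real.pi * Complex.I *
    ((Algebra.trace (ZMod p) F (∑ i, x i * y i)).val : ℂ) / (p : ℂ))

open Finset

theorem AddChar.map_sum_eq_prod {A M ι : Type*} [AddCommMonoid A] [CommMonoid M]
    (ψ : AddChar A M) (s : Finset ι) (f : ι → A) : ψ (∑ i ∈ s, f i) = ∏ i ∈ s, ψ (f i) := by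
  classical
  induction s using Finset.induction with
  | empty => simp
  | insert a s ha ih => rw [sum_insert ha, prod_insert ha, AddChar.map_add_eq_mul, ih]

theorem prod_ite_eq_zero_eq_pow_hammingNorm {ι β M : Type*} [Fintype ι] [Zero β]
    [DecidableEq β] [CommMonoid M] (v : ι → β) (a b : M) :
    ∏ i, (if v i = 0 then a else b)
      = a ^ (Fintype.card ι - hammingNorm v) * b ^ hammingNorm v := by
  have hsplit := card_filter_add_card_filter_not (s := (univ : Finset ι)) (p := fun i => v i = 0)
  rw [card_univ] at hsplit
  rw [prod_ite, prod_const, prod_const, ← hammingNorm]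
  congr
  simp only [hammingNorm, ne_eq] at hsplit ⊢
  omega

theorem sum_ite_eq_zero_mul_addChar {R R' : Type*} [CommRing R] [Fintype R] [DecidableEq R]
    [CommRing R'] [IsDomain R'] {ψ : AddChar R R'} (hψ : ψ.IsPrimitive) (a b : R') (t : R) :
    ∑ x : R, (if x = 0 then a else b) * ψ (x * t)
      = if t = 0 then a + ((Fintype.card R : R') - 1) * b else a - b := by
  have hsplit (x : R) : (if x = 0 then a else b) * ψ (x * t)
      = (if x = 0 then a - b else 0) + b * ψ (x * t) := by
    split_ifs with hx <;> simp [hx]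
  simp_rw [hsplit, sum_add_distrib, ← mul_sum, AddChar.sum_mulShift t hψ, sum_ite_eq', mem_univ,
    if_true]
  split_ifs <;> ring

theorem sum_pow_hammingNorm_mul_addChar {ι R R' : Type*} [Fintype ι] [DecidableEq ι]
    [CommRing R] [Fintype R] [DecidableEq R] [CommRing R'] [IsDomain R'] {ψ : AddChar R R'}
    (hψ : ψ.IsPrimitive) (a b : R') (y : ι → R) :
    ∑ e : ι → R, a ^ (Fintype.card ι - hammingNorm e) * b ^ hammingNorm e * ψ (∑ i, e i * y i)
      = (a + ((Fintype.card R : R') - 1) * b) ^ (Fintype.card ι - hammingNorm y)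
          * (a - b) ^ hammingNorm y := by
  calc _ = ∑ e : ι → R, ∏ i, (if e i = 0 then a else b) * ψ (e i * y i) := by
        refine sum_congr rfl fun e _ => ?_
        rw [prod_mul_distrib, prod_ite_eq_zero_eq_pow_hammingNorm, AddChar.map_sum_eq_prod]
    _ = ∏ i, ∑ x : R, (if x = 0 then a else b) * ψ (x * y i) :=
        (Fintype.prod_sum fun i x => (if x = 0 then a else b) * ψ (x * y i)).symm
    _ = _ := by
        simp_rw [sum_ite_eq_zero_mul_addChar hψ, prod_ite_eq_zero_eq_pow_hammingNorm]

noncomputable def traceAddChar (p : ℕ) [NeZero p] (F : Type*) [CommRing F]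
    [Algebra (ZMod p) F] : AddChar F ℂ :=
  ZMod.stdAddChar.compAddMonoidHom (Algebra.trace (ZMod p) F).toAddMonoidHom

theorem chiChar_eq_traceAddChar (p : ℕ) [NeZero p] {n : ℕ} (F : Type*) [Field F]
    [Algebra (ZMod p) F] (y x : Fin n → F) :
    chiChar p F y x = traceAddChar p F (∑ i, x i * y i) := by
  simp [chiChar, traceAddChar, ZMod.stdAddChar_apply, ZMod.toCircle_apply]

theorem isPrimitive_traceAddChar (p : ℕ) [Fact p.Prime] (F : Type*) [Field F] [Finite F]
    [Algebra (ZMod p) F] : (traceAddChar p F).IsPrimitive := by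
  refine AddChar.IsPrimitive.of_ne_one (AddChar.ne_one_iff.2 ?_)
  have : CharP F p := charP_of_injective_algebraMap (algebraMap (ZMod p) F).injective p
  obtain rfl : ringChar F = p := ringChar.eq F p
  obtain ⟨b, hb⟩ := FiniteField.trace_to_zmod_nondegenerate F one_ne_zero
  refine ⟨b, fun h => hb ?_⟩
  rw [traceAddChar, AddChar.compAddMonoidHom_apply,
    ← AddChar.map_zero_eq_one (ZMod.stdAddChar (N := ringChar F))] at h
  rw [one_mul]
  exact ZMod.injective_stdAddChar h

noncomputable def dualCrossoverProb (q τ : ℝ) : ℝ := (√((q - 1) * (1 - τ)) - √τ) ^ 2 / q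

section
variable {q τ : ℝ}

theorem dualCrossoverProb_eq (hq : 1 < q) :
    dualCrossoverProb q τ = (q - 1) * (√(1 - τ) - √(τ / (q - 1))) ^ 2 / q := by
  have hq1 : 0 < q - 1 := sub_pos.2 hq
  have hτ : √τ = √(q - 1) * √(τ / (q - 1)) := by
    rw [← Real.sqrt_mul hq1.le, mul_div_cancel₀ _ hq1.ne']
  rw [dualCrossoverProb, Real.sqrt_mul hq1.le, hτ, ← mul_sub, mul_pow, Real.sq_sqrt hq1.le]

theorem sqrt_one_sub_dualCrossoverProb (hq : 1 < q) (hτ0 : 0 ≤ τ) (hτ1 : τ ≤ 1) :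
    √(1 - dualCrossoverProb q τ) = (√(1 - τ) + (q - 1) * √(τ / (q - 1))) / √q := by
  have hq1 : 0 < q - 1 := sub_pos.2 hq
  have ha : √(1 - τ) ^ 2 = 1 - τ := Real.sq_sqrt (by linarith)
  have hb : (q - 1) * √(τ / (q - 1)) ^ 2 = τ := by
    rw [Real.sq_sqrt (by positivity), mul_div_cancel₀ _ hq1.ne']
  have hsq : 1 - dualCrossoverProb q τ = (√(1 - τ) + (q - 1) * √(τ / (q - 1))) ^ 2 / q := by
    rw [dualCrossoverProb_eq hq]
    field_simp
    -- `(a + (q-1) b)² + (q-1) (a - b)² = q (a² + (q-1) b²) = q`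
    linear_combination (-q) * ha - q * hb
  rw [hsq, Real.sqrt_div' _ (by positivity), Real.sqrt_sq (by positivity)]

theorem sqrt_dualCrossoverProb_div (hq : 1 < q) (hτ1 : τ ≤ (q - 1) / q) :
    √(dualCrossoverProb q τ / (q - 1)) = (√(1 - τ) - √(τ / (q - 1))) / √q := by
  have hq1 : 0 < q - 1 := sub_pos.2 hq
  have hle : τ / (q - 1) ≤ 1 - τ := by
    rw [div_le_iff₀ hq1]
    rw [le_div_iff₀ (by linarith)] at hτ1
    nlinarith
  have hsq : dualCrossoverProb q τ / (q - 1) = (√(1 - τ) - √(τ / (q - 1))) ^ 2 / q := by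
    rw [dualCrossoverProb_eq hq]
    field_simp
  rw [hsq, Real.sqrt_div' _ (by positivity),
    Real.sqrt_sq (sub_nonneg.2 (Real.sqrt_le_sqrt hle))]

end

theorem fourier_of_bernoulli_state_general
    (p s n : ℕ) (hp : p.Prime)
    (F : Type) [Field F] [Fintype F] [DecidableEq F] [Algebra (ZMod p) F]
    (hF : Fintype.card F = p ^ s)
    (q : ℕ) (hq : q = p ^ s)
    (τ : ℝ) (hτ0 : 0 ≤ τ) (hτ1 : τ ≤ ((q : ℝ) - 1) / (q : ℝ))
    (τperp : ℝ)
    (hperp : τperp = (Real.sqrt (((q : ℝ) - 1) * (1 - τ)) - Real.sqrt τ) ^ 2 / (q : ℝ))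
    (y : Fin n → F) (w : ℕ) (hw : hammingNorm y = w) :
    (((Real.sqrt (q : ℝ)) ^ n)⁻¹ : ℂ) *
        ∑ e : Fin n → F,
          ((Real.sqrt (1 - τ) ^ (n - hammingNorm e) *
              Real.sqrt (τ / ((q : ℝ) - 1)) ^ (hammingNorm e) : ℝ) : ℂ) * chiChar p F y e
      = ((Real.sqrt (1 - τperp) ^ (n - w) *
            Real.sqrt (τperp / ((q : ℝ) - 1)) ^ w : ℝ) : ℂ) := by
  have : Fact p.Prime := ⟨hp⟩
  have hcard : Fintype.card F = q := hF.trans hq.symm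
  have hq1 : (1 : ℝ) < q := by exact_mod_cast hcard ▸ Fintype.one_lt_card
  have hτle1 : τ ≤ 1 := hτ1.trans (div_le_one_of_le₀ (by linarith) (by linarith))
  obtain rfl : τperp = dualCrossoverProb q τ := hperp
  subst hw
  have hfourier := sum_pow_hammingNorm_mul_addChar (isPrimitive_traceAddChar p F)
    (√(1 - τ) : ℂ) (√(τ / (q - 1)) : ℂ) y
  rw [Fintype.card_fin, hcard] at hfourier
  rw [sqrt_one_sub_dualCrossoverProb hq1 hτ0 hτle1, sqrt_dualCrossoverProb_div hq1 hτ1]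
  simp_rw [chiChar_eq_traceAddChar]
  push_cast
  rw [hfourier, div_pow, div_pow, div_mul_div_comm, ← pow_add,
    Nat.sub_add_cancel (hammingNorm_le_card_fintype.trans_eq (Fintype.card_fin n)), inv_mul_eq_div]

/-- Fourier transform of the Bernoulli product state (Section C of the paper):
for `y` of Hamming weight `w`,
`q^{−n/2}·Σ_e (1−τ)^{(n−wt(e))/2}(τ/(q−1))^{wt(e)/2}·χ_y(e)
  = (1−τ^⊥)^{(n−w)/2}(τ^⊥/(q−1))^{w/2}`
where `τ^⊥ = (√((q−1)(1−τ)) − √τ)²/q`. -/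
theorem fourier_of_bernoulli_state
    (p s n : ℕ) (hp : p.Prime) (hs : 1 ≤ s) (hn : 1 ≤ n)
    (F : Type) [Field F] [Fintype F] [DecidableEq F] [Algebra (ZMod p) F]
    (hF : Fintype.card F = p ^ s)
    (q : ℕ) (hq : q = p ^ s)
    (τ : ℝ) (hτ0 : 0 ≤ τ) (hτ1 : τ ≤ ((q : ℝ) - 1) / (q : ℝ))
    (τperp : ℝ)
    (hperp : τperp = (Real.sqrt (((q : ℝ) - 1) * (1 - τ)) - Real.sqrt τ) ^ 2 / (q : ℝ))
    (y : Fin n → F) (w : ℕ) (hw : hammingNorm y = w) :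
    (((Real.sqrt (q : ℝ)) ^ n)⁻¹ : ℂ) *
        ∑ e : Fin n → F,
          ((Real.sqrt (1 - τ) ^ (n - hammingNorm e) *
              Real.sqrt (τ / ((q : ℝ) - 1)) ^ (hammingNorm e) : ℝ) : ℂ) * chiChar p F y e
      = ((Real.sqrt (1 - τperp) ^ (n - w) *
            Real.sqrt (τperp / ((q : ℝ) - 1)) ^ w : ℝ) : ℂ) :=
  fourier_of_bernoulli_state_general p s n hp F hF q hq τ hτ0 hτ1 τperp hperp y w hw
end

section
/- Let q ≥ 2 be an integer and let τ ∈ (0, (q−1)/q). Set τ^⊥ := (√((q−1)(1−τ)) − √τ)²/q. Then h_q(τ) + h_q(τ^⊥) > 1. In particular, if R ∈ (0,1) and h_q(τ) < 1 − R, then h_q(τ^⊥) > R. -/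
/-!
Write `τ = sin² α`. For the angle `γ = arccos (1/√q)`, so that `sin² γ = (q-1)/q`, the subtraction
formula for `sin` gives `τ^⊥ = sin² (γ - α)`: in the angle coordinate, `τ ↦ τ^⊥` is the reflection
`α ↦ γ - α`. Hence `G α = h(sin² α) + h(sin² (γ - α))` is symmetric about `γ/2` with
`G 0 = h((q-1)/q) = 1`, and it suffices that `G` increases on `[0, γ/2]`.

With `u = sin α`, `v = √(q-1) cos α`, the derivative of `α ↦ h(sin² α)` is proportional to
`u v log (v/u)`, the reflection acts by `(u, v) ↦ ((v - u)/√q, ((q-1) u + v)/√q)`, and `α < γ/2`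
means `(1 + √q) u < v`. With `x = v/u - 1`, the sign of `G'` becomes
`x (x + q) log ((x + q)/x) < q (1 + x) log (1 + x)` for `x > √q`: the difference of the two sides
vanishes at `x = √q` and increases beyond it.
-/

/-- The `q`-ary entropy function
`h_q(x) = −x·log_q(x/(q−1)) − (1−x)·log_q(1−x)`. -/
noncomputable def qaryEntropy (q : ℕ) (x : ℝ) : ℝ :=
  -x * Real.logb q (x / ((q : ℝ) - 1)) - (1 - x) * Real.logb q (1 - x)

open Real hiding qaryEntropy
open Set

theorem hasDerivAt_mul_log_one_add_sub {Q x : ℝ} (hQ : 0 < Q) (hx : 0 < x) :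
    HasDerivAt (fun y => Q * (1 + y) * log (1 + y) - y * (y + Q) * log ((y + Q) / y))
      (Q * log (1 + x) + 2 * Q - (2 * x + Q) * log ((x + Q) / x)) x := by
  have hid := hasDerivAt_id' x
  have h₁ := hid.const_add 1
  have h₂ := (hid.add_const Q).fun_div hid hx.ne'
  have h₃ := hid.fun_mul (hid.add_const Q)
  refine (((h₁.const_mul Q).fun_mul (h₁.log (by positivity))).fun_sub
    (h₃.fun_mul (h₂.log (by positivity)))).congr_deriv ?_
  field_simp
  ring

theorem mul_log_div_lt_of_sqrt_lt {Q x : ℝ} (hQ : 0 < Q) (hx : √Q < x) :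
    x * (x + Q) * log ((x + Q) / x) < Q * (1 + x) * log (1 + x) := by
  set F := fun y => Q * (1 + y) * log (1 + y) - y * (y + Q) * log ((y + Q) / y)
  have hsqrt : 0 < √Q := sqrt_pos.mpr hQ
  have hderiv (y : ℝ) (hy : √Q ≤ y) := hasDerivAt_mul_log_one_add_sub hQ (hsqrt.trans_le hy)
  have hmono : StrictMonoOn F (Ici √Q) := by
    refine strictMonoOn_of_deriv_pos (convex_Ici _)
      (fun y hy => (hderiv y hy).continuousAt.continuousWithinAt) fun y hy => ?_
    rw [interior_Ici] at hy
    have hy0 : 0 < y := hsqrt.trans hy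
    have hQy : Q < y ^ 2 := (sqrt_lt' hy0).mp hy
    rw [(hderiv y hy.le).deriv]
    have hlog_lt : log ((y + Q) / y) < log (1 + y) :=
      log_lt_log (by positivity) ((div_lt_iff₀ hy0).mpr (by nlinarith))
    have hmul_log_le : y * log ((y + Q) / y) ≤ Q := by
      have := log_le_sub_one_of_pos (show 0 < (y + Q) / y by positivity)
      have : y * log ((y + Q) / y) ≤ y * ((y + Q) / y - 1) := by gcongr
      rwa [show y * ((y + Q) / y - 1) = Q by field_simp; ring] at this
    nlinarith
  have hF : F √Q = 0 := by
    have hsq : √Q ^ 2 = Q := sq_sqrt hQ.le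
    have : (√Q + Q) / √Q = 1 + √Q := by field_simp; nlinarith
    simp only [F, this]
    linear_combination (-log (1 + √Q)) * hsq
  have := hmono self_mem_Ici hx.le hx
  simp only [hF, F] at this
  linarith

theorem sub_mul_log_div_lt_of_one_add_sqrt_mul_lt {Q u v : ℝ} (hQ : 0 < Q) (hu : 0 < u)
    (huv : (1 + √Q) * u < v) :
    (v - u) * ((Q - 1) * u + v) * log (((Q - 1) * u + v) / (v - u)) <
      Q * (u * v * log (v / u)) := by
  have hx : √Q < (v - u) / u := by rw [lt_div_iff₀ hu]; linarith
  have hvu : 0 < v - u := by nlinarith [sqrt_nonneg Q]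
  have key := mul_log_div_lt_of_sqrt_lt hQ hx
  rw [show ((v - u) / u + Q) / ((v - u) / u) = ((Q - 1) * u + v) / (v - u) by field_simp; ring,
    show 1 + (v - u) / u = v / u by field_simp; ring] at key
  calc (v - u) * ((Q - 1) * u + v) * log (((Q - 1) * u + v) / (v - u))
      = u ^ 2 * ((v - u) / u * ((v - u) / u + Q) * log (((Q - 1) * u + v) / (v - u))) := by
        field_simp; ring
    _ < u ^ 2 * (Q * (v / u) * log (v / u)) := by gcongr
    _ = Q * (u * v * log (v / u)) := by field_simp

section
variable {q : ℕ}

noncomputable def perpAngle (q : ℕ) : ℝ := arccos (1 / √q)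

theorem sqrt_mul_cos_perpAngle (hq : 0 < q) : √q * cos (perpAngle q) = 1 := by
  have : 0 < √q := sqrt_pos.mpr (Nat.cast_pos.mpr hq)
  rw [perpAngle, cos_arccos (by linarith [one_div_pos.mpr this]) ?_]
  · field_simp
  · rw [div_le_one this, one_le_sqrt]; exact_mod_cast hq

theorem sqrt_mul_sin_perpAngle (hq : 0 < q) : √q * sin (perpAngle q) = √(q - 1) := by
  have : (0 : ℝ) < q := Nat.cast_pos.mpr hq
  rw [perpAngle, sin_arccos, ← sqrt_mul this.le, div_pow, sq_sqrt this.le]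
  congr 1
  field_simp

theorem perpAngle_pos (hq : 1 < q) : 0 < perpAngle q := by
  have : (1 : ℝ) < √q := by rw [lt_sqrt zero_le_one]; exact_mod_cast (by omega : 1 < q)
  exact arccos_pos.mpr ((div_lt_one (by linarith)).mpr this)

theorem perpAngle_le_pi_div_two : perpAngle q ≤ π / 2 :=
  arccos_le_pi_div_two.mpr (by positivity)

theorem sqrt_mul_sin_perpAngle_sub (hq : 0 < q) (x : ℝ) :
    √q * sin (perpAngle q - x) = √(q - 1) * cos x - sin x := by
  rw [sin_sub, mul_sub, ← mul_assoc, ← mul_assoc, sqrt_mul_sin_perpAngle hq,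
    sqrt_mul_cos_perpAngle hq, one_mul]

theorem sqrt_mul_cos_perpAngle_sub (hq : 0 < q) (x : ℝ) :
    √q * (√(q - 1) * cos (perpAngle q - x)) = (q - 1) * sin x + √(q - 1) * cos x := by
  have : √((q : ℝ) - 1) ^ 2 = q - 1 := sq_sqrt (by simp; exact_mod_cast hq)
  rw [cos_sub, mul_left_comm, mul_add, ← mul_assoc, ← mul_assoc, sqrt_mul_sin_perpAngle hq,
    sqrt_mul_cos_perpAngle hq]
  linear_combination sin x * this

theorem hasDerivAt_qaryEntropy_sin_sq (hq : 1 < q) {x : ℝ} (hs : 0 < sin x) (hc : 0 < cos x) :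
    HasDerivAt (fun α => Real.qaryEntropy q (sin α ^ 2))
      (4 * (sin x * cos x * log (√(q - 1) * cos x / sin x))) x := by
  have hq' : (0 : ℝ) < q - 1 := by rw [sub_pos]; exact_mod_cast hq
  have hs1 : sin x ^ 2 ≠ 1 := by nlinarith [sin_sq_add_cos_sq x]
  refine ((Real.hasDerivAt_qaryEntropy (by positivity) hs1).comp x
    ((hasDerivAt_sin x).pow 2)).congr_deriv ?_
  rw [← cos_sq', log_div (by positivity) hs.ne', log_mul (by positivity) hc.ne', log_sqrt hq'.le,
    log_pow, log_pow]
  push_cast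
  ring

theorem sin_mul_cos_mul_log_perpAngle_sub_lt (hq : 1 < q) {x : ℝ} (hx₀ : 0 < x)
    (hx : x < perpAngle q - x) :
    sin (perpAngle q - x) * cos (perpAngle q - x) *
        log (√(q - 1) * cos (perpAngle q - x) / sin (perpAngle q - x)) <
      sin x * cos x * log (√(q - 1) * cos x / sin x) := by
  have hq₀ : (0 : ℝ) < q := by exact_mod_cast (by omega : 0 < q)
  have hγ := perpAngle_le_pi_div_two (q := q)
  have hs : 0 < sin x := sin_pos_of_pos_of_lt_pi hx₀ (by linarith [pi_pos])
  have hsin : sin x < sin (perpAngle q - x) :=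
    sin_lt_sin_of_lt_of_le_pi_div_two (by linarith [pi_pos]) (by linarith) hx
  have huv : (1 + √q) * sin x < √(q - 1) * cos x := by
    nlinarith [sqrt_mul_sin_perpAngle_sub (q := q) (by omega) x, sqrt_pos.mpr hq₀]
  have key := sub_mul_log_div_lt_of_one_add_sqrt_mul_lt hq₀ hs huv
  rw [← sqrt_mul_sin_perpAngle_sub (by omega), ← sqrt_mul_cos_perpAngle_sub (by omega),
    mul_div_mul_left _ _ (sqrt_pos.mpr hq₀).ne'] at key
  refine lt_of_mul_lt_mul_left (a := q * √(q - 1)) ?_ (by positivity)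
  have hsq : √(q : ℝ) ^ 2 = q := sq_sqrt hq₀.le
  linear_combination key - √(q - 1) * sin (perpAngle q - x) * cos (perpAngle q - x) *
    log (√(q - 1) * cos (perpAngle q - x) / sin (perpAngle q - x)) * hsq

theorem strictMonoOn_qaryEntropy_sin_sq_add (hq : 1 < q) :
    StrictMonoOn
      (fun α => Real.qaryEntropy q (sin α ^ 2) + Real.qaryEntropy q (sin (perpAngle q - α) ^ 2))
      (Icc 0 (perpAngle q / 2)) := by
  refine strictMonoOn_of_deriv_pos (convex_Icc _ _) (by fun_prop) fun x hx => ?_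
  rw [interior_Icc] at hx
  obtain ⟨hx₀, hx⟩ := hx
  have hγ := perpAngle_le_pi_div_two (q := q)
  have hpos (y : ℝ) (hy₀ : 0 < y) (hy : y < perpAngle q) : 0 < sin y ∧ 0 < cos y :=
    ⟨sin_pos_of_pos_of_lt_pi hy₀ (by linarith [pi_pos]),
      cos_pos_of_mem_Ioo ⟨by linarith [pi_pos], by linarith⟩⟩
  obtain ⟨hs, hc⟩ := hpos x hx₀ (by linarith)
  obtain ⟨hs', hc'⟩ := hpos (perpAngle q - x) (by linarith) (by linarith)
  have hderiv : HasDerivAt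
      (fun α => Real.qaryEntropy q (sin α ^ 2) + Real.qaryEntropy q (sin (perpAngle q - α) ^ 2))
      _ x := (hasDerivAt_qaryEntropy_sin_sq hq hs hc).add
        ((hasDerivAt_qaryEntropy_sin_sq hq hs' hc').comp x ((hasDerivAt_id' x).const_sub _))
  rw [hderiv.deriv]
  linarith [sin_mul_cos_mul_log_perpAngle_sub_lt hq hx₀ (by linarith)]

theorem sin_perpAngle_sq (hq : 0 < q) : sin (perpAngle q) ^ 2 = (q - 1) / q := by
  have hq₀ : (0 : ℝ) < q := Nat.cast_pos.mpr hq
  have h := congrArg (· ^ 2) (sqrt_mul_sin_perpAngle hq)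
  have hq₁ : (0 : ℝ) ≤ q - 1 := by simp; exact_mod_cast hq
  simp only [mul_pow, sq_sqrt hq₀.le, sq_sqrt hq₁] at h
  field_simp
  linarith

theorem qaryEntropy_sub_one_div (hq : 1 < q) : Real.qaryEntropy q ((q - 1) / q) = log q := by
  have hq₀ : (0 : ℝ) < q := by exact_mod_cast (by omega : 0 < q)
  have hq₁ : (0 : ℝ) < q - 1 := by rw [sub_pos]; exact_mod_cast hq
  rw [Real.qaryEntropy, binEntropy, show (1 : ℝ) - (q - 1) / q = 1 / q by field_simp; ring]
  push_cast
  rw [inv_div, one_div, inv_inv, log_div hq₀.ne' hq₁.ne']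
  field_simp
  ring

theorem log_lt_qaryEntropy_sin_sq_add (hq : 1 < q) {α : ℝ} (h₀ : 0 < α) (h : α < perpAngle q) :
    log q < Real.qaryEntropy q (sin α ^ 2) + Real.qaryEntropy q (sin (perpAngle q - α) ^ 2) := by
  suffices hhalf : ∀ β ∈ Ioc 0 (perpAngle q / 2),
      log q < Real.qaryEntropy q (sin β ^ 2) + Real.qaryEntropy q (sin (perpAngle q - β) ^ 2) by
    rcases le_total α (perpAngle q / 2) with hα | hα
    · exact hhalf α ⟨h₀, hα⟩
    · simpa only [sub_sub_cancel, add_comm] using hhalf (perpAngle q - α) ⟨by linarith, by linarith⟩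
  intro β ⟨hβ₀, hβ⟩
  have hmono := strictMonoOn_qaryEntropy_sin_sq_add hq
    ⟨le_rfl, (half_pos (perpAngle_pos hq)).le⟩ ⟨hβ₀.le, hβ⟩ hβ₀
  simpa only [sin_zero, sub_zero, sin_perpAngle_sq (by omega : 0 < q), qaryEntropy_sub_one_div hq,
    ne_eq, OfNat.ofNat_ne_zero, not_false_eq_true, zero_pow, Real.qaryEntropy_zero, zero_add]
    using hmono

theorem arcsin_sqrt_mem_Ioo (hq : 0 < q) {τ : ℝ} (hτ : τ ∈ Ioo 0 (((q : ℝ) - 1) / q)) :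
    arcsin √τ ∈ Ioo 0 (perpAngle q) := by
  have hq₀ : (0 : ℝ) < q := Nat.cast_pos.mpr hq
  have hγ : perpAngle q ∈ Icc (-(π / 2)) (π / 2) :=
    ⟨(neg_nonpos.mpr pi_div_two_pos.le).trans (arccos_nonneg _), perpAngle_le_pi_div_two⟩
  refine ⟨arcsin_pos.mpr (sqrt_pos.mpr hτ.1), (arcsin_lt_iff_lt_sin ?_ hγ).mpr ?_⟩
  · exact ⟨by linarith [sqrt_nonneg τ], sqrt_le_one.mpr (hτ.2.le.trans (by
      rw [div_le_one hq₀]; linarith))⟩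
  · rw [← mul_lt_mul_iff_right₀ (sqrt_pos.mpr hq₀), sqrt_mul_sin_perpAngle hq, ← sqrt_mul hq₀.le]
    exact sqrt_lt_sqrt (mul_pos hq₀ hτ.1).le (by linarith [(lt_div_iff₀' hq₀).mp hτ.2])

theorem sin_perpAngle_sub_arcsin_sqrt_sq (hq : 0 < q) {τ : ℝ} (h₀ : 0 ≤ τ) (h₁ : τ ≤ 1) :
    sin (perpAngle q - arcsin √τ) ^ 2 = (√((q - 1) * (1 - τ)) - √τ) ^ 2 / q := by
  have hq₀ : (0 : ℝ) < q := Nat.cast_pos.mpr hq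
  have h := sqrt_mul_sin_perpAngle_sub hq (arcsin √τ)
  rw [sin_arcsin (by linarith [sqrt_nonneg τ]) (sqrt_le_one.mpr h₁), cos_arcsin, sq_sqrt h₀,
    ← sqrt_mul (by simp; exact_mod_cast hq)] at h
  rw [← h, mul_pow, sq_sqrt hq₀.le]
  field_simp

theorem qaryEntropy_eq_div_log (hq : 1 < q) (x : ℝ) :
    qaryEntropy q x = Real.qaryEntropy q x / log q := by
  have hq₁ : (0 : ℝ) < q - 1 := by rw [sub_pos]; exact_mod_cast hq
  rcases eq_or_ne x 0 with rfl | hx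
  · simp [qaryEntropy]
  rw [qaryEntropy, Real.qaryEntropy, binEntropy, logb, logb, log_div hx hq₁.ne', log_inv, log_inv]
  push_cast
  ring

end

/-- For `τ ∈ (0, (q−1)/q)` and `τ^⊥ = (√((q−1)(1−τ)) − √τ)²/q`, one has
`h_q(τ) + h_q(τ^⊥) > 1`; in particular if `h_q(τ) < 1 − R` for `R ∈ (0,1)`,
then `h_q(τ^⊥) > R`. -/
theorem entropy_sum_gt_one
    (q : ℕ) (hq : 2 ≤ q)
    (τ : ℝ) (hτ : τ ∈ Set.Ioo (0 : ℝ) (((q : ℝ) - 1) / (q : ℝ)))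
    (τperp : ℝ)
    (hperp : τperp = (Real.sqrt (((q : ℝ) - 1) * (1 - τ)) - Real.sqrt τ) ^ 2 / (q : ℝ)) :
    1 < qaryEntropy q τ + qaryEntropy q τperp
    ∧ ∀ R : ℝ, R ∈ Set.Ioo (0 : ℝ) 1 → qaryEntropy q τ < 1 - R → R < qaryEntropy q τperp := by
  have hq₁ : (1 : ℝ) < q := by exact_mod_cast hq
  have hτ₁ : τ < 1 := hτ.2.trans ((div_lt_one (by linarith)).mpr (by linarith))
  obtain ⟨hα₀, hα⟩ := arcsin_sqrt_mem_Ioo (by omega : 0 < q) hτ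
  have hnats := log_lt_qaryEntropy_sin_sq_add hq hα₀ hα
  rw [sin_arcsin (by linarith [sqrt_nonneg τ]) (sqrt_le_one.mpr hτ₁.le), sq_sqrt hτ.1.le,
    sin_perpAngle_sub_arcsin_sqrt_sq (by omega : 0 < q) hτ.1.le hτ₁.le, ← hperp] at hnats
  have hsum : 1 < qaryEntropy q τ + qaryEntropy q τperp := by
    rwa [qaryEntropy_eq_div_log hq, qaryEntropy_eq_div_log hq, ← add_div,
      one_lt_div (log_pos hq₁)]
  exact ⟨hsum, fun R _ hR => by linarith⟩
end
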